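/- arXiv:2508.20008 — 2 statements merged into one kernel-verified Lean document; each statement's English description precedes it below -/
import Mathlib

section
/- Let H be an irreducible positive analytic system with generating function solution Y and radius of convergence ρ. Then either every coordinate Y_i(x) tends to +∞ as x → ρ−, or every coordinate Y_i(x) has a finite limit as x → ρ−. Moreover, the first alternative can occur only if the system is linear. -/
open scoped ENNReal NNReal Topology
open Filter

namespace AnalyticComb

/-- A positive analytic system in dimension `m`: nonnegative real coefficients indexed by
multi-indices in `ℕ^{m+1}`. -/
structure PosSystem (m : ℕ) where
  c : Fin m → (Fin (m + 1) → ℕ) → ℝ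
  nonneg : ∀ i d, 0 ≤ c i d

variable {m : ℕ}

/-- The point `(z, Y) ∈ ℝ^{m+1}`. -/
def vec (z : ℝ) (Y : Fin m → ℝ) : Fin (m + 1) → ℝ := Fin.cons z Y

/-- General term of the series defining `H_i` at `x`. -/
def term (S : PosSystem m) (i : Fin m) (x : Fin (m + 1) → ℝ) (d : Fin (m + 1) → ℕ) : ℝ :=
  S.c i d * ∏ j, x j ^ d j

/-- `x` belongs to the domain of convergence `D(H)`: all `m` series converge absolutely. -/
def ConvAt (S : PosSystem m) (x : Fin (m + 1) → ℝ) : Prop :=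
  ∀ i, Summable fun d => |term S i x d|

/-- The value `H(x) ∈ ℝ^m`. -/
noncomputable def Hval (S : PosSystem m) (x : Fin (m + 1) → ℝ) : Fin m → ℝ :=
  fun i => ∑' d, term S i x d

/-- General term of the termwise-differentiated series `∂H_i/∂Y_j` at `x`. -/
def jacTerm (S : PosSystem m) (i j : Fin m) (x : Fin (m + 1) → ℝ)
    (d : Fin (m + 1) → ℕ) : ℝ :=
  S.c i d * (d j.succ : ℝ) * ∏ k, x k ^ (if k = j.succ then d k - 1 else d k)

/-- Absolute convergence of all entries of the Jacobian `∂H/∂Y` at `x`. -/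
def JacConvAt (S : PosSystem m) (x : Fin (m + 1) → ℝ) : Prop :=
  ∀ i j, Summable fun d => |jacTerm S i j x d|

/-- The Jacobian matrix `∂H/∂Y(x)`. -/
noncomputable def jac (S : PosSystem m) (x : Fin (m + 1) → ℝ) : Matrix (Fin m) (Fin m) ℝ :=
  Matrix.of fun i j => ∑' d, jacTerm S i j x d

/-- Entries of the Jacobian, as sums in `[0,+∞]` (convention `∞·0 = 0`). -/
noncomputable def jacEnn (S : PosSystem m) (x : Fin (m + 1) → ℝ) (i j : Fin m) : ℝ≥0∞ :=
  ∑' d, ENNReal.ofReal (jacTerm S i j x d)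

/-- General term of the termwise twice-differentiated series `∂²H_l/∂Y_i∂Y_j` at `x`. -/
def jac2Term (S : PosSystem m) (l i j : Fin m) (x : Fin (m + 1) → ℝ)
    (d : Fin (m + 1) → ℕ) : ℝ :=
  S.c l d * (d i.succ : ℝ) * ((d j.succ - if i = j then 1 else 0 : ℕ) : ℝ) *
    ∏ k, x k ^ (d k - (if k = i.succ then 1 else 0) - (if k = j.succ then 1 else 0))

/-- The value of `∂²H_l/∂Y_i∂Y_j` at `x`. -/
noncomputable def jac2 (S : PosSystem m) (l i j : Fin m) (x : Fin (m + 1) → ℝ) : ℝ :=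
  ∑' d, jac2Term S l i j x d

/-- Spectral radius: largest modulus of a complex eigenvalue of a real matrix. -/
noncomputable def specRad {n : Type*} [Fintype n] [DecidableEq n] (A : Matrix n n ℝ) : ℝ≥0∞ :=
  spectralRadius ℂ (A.map Complex.ofReal)

/-- `Λ_H(x)`: spectral radius of the Jacobian matrix at `x`. -/
noncomputable def lambda (S : PosSystem m) (x : Fin (m + 1) → ℝ) : ℝ≥0∞ :=
  specRad (jac S x)

/-- The iterates `U^{[k]}` (`U^{[0]} = 0`, `U^{[k+1]} = H(0, U^{[k]})`). -/
noncomputable def uIter (S : PosSystem m) : ℕ → Fin m → ℝ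
  | 0 => 0
  | k + 1 => Hval S (vec 0 (uIter S k))

/-- The system is well founded. -/
def IsWF (S : PosSystem m) : Prop :=
  (∀ k ≤ m, ConvAt S (vec 0 (uIter S k))) ∧
    JacConvAt S (vec 0 (uIter S m)) ∧
    IsNilpotent (jac S (vec 0 (uIter S m)))

/-- The system is linear: no coefficient with total `Y`-degree at least `2`. -/
def IsLinear (S : PosSystem m) : Prop :=
  ∀ i d, 2 ≤ ∑ j : Fin m, d j.succ → S.c i d = 0

/-- `∂H_i/∂Y_j` is not identically zero on `D(H)`. -/
def DependsOn (S : PosSystem m) (i j : Fin m) : Prop :=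
  ∃ x : Fin (m + 1) → ℝ, ConvAt S x ∧ (Summable fun d => |jacTerm S i j x d|) ∧
    jac S x i j ≠ 0

/-- For every pair `(i,j)` there is a chain `i = i₀, …, i_k = j`, `k ≥ 1`, of nonvanishing
partial derivatives. -/
def StronglyConnected (S : PosSystem m) : Prop :=
  ∀ i j : Fin m, ∃ k : ℕ, 1 ≤ k ∧ ∃ p : Fin (k + 1) → Fin m,
    p 0 = i ∧ p (Fin.last k) = j ∧ ∀ t : Fin k, DependsOn S (p t.castSucc) (p t.succ)

/-- Radius of convergence of a real power series given by its coefficients. -/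
noncomputable def radius (a : ℕ → ℝ) : ℝ≥0∞ :=
  ⨆ (r : ℝ≥0) (_ : Summable fun n => |a n| * (r : ℝ) ^ n), (r : ℝ≥0∞)

/-- Evaluation of a vector of power series at a real point. -/
noncomputable def eval (y : Fin m → ℕ → ℝ) (x : ℝ) : Fin m → ℝ :=
  fun i => ∑' n, y i n * x ^ n

/-- Convergence of all the coordinate power series at `x`. -/
def EvalConv (y : Fin m → ℕ → ℝ) (x : ℝ) : Prop :=
  ∀ i, Summable fun n => y i n * x ^ n

/-- A generating function solution of a (well-founded) system. -/
structure GFSol (S : PosSystem m) where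
  y : Fin m → ℕ → ℝ
  nonneg : ∀ i n, 0 ≤ y i n
  rad_pos : 0 < ⨅ i, radius (y i)
  init : eval y 0 = uIter S m
  conv : ∀ x : ℝ, 0 ≤ x → ENNReal.ofReal x < ⨅ i, radius (y i) →
    ConvAt S (vec x (eval y x))
  fixed : ∀ x : ℝ, 0 ≤ x → ENNReal.ofReal x < ⨅ i, radius (y i) →
    eval y x = Hval S (vec x (eval y x))

/-- The radius of convergence `ρ` of the solution. -/
noncomputable def GFSol.rad {S : PosSystem m} (sol : GFSol S) : ℝ≥0∞ :=
  ⨅ i, radius (sol.y i)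

/-- The system is zero-free: no coordinate of the solution is the zero power series. -/
def GFSol.ZeroFree {S : PosSystem m} (sol : GFSol S) : Prop :=
  ∀ i, ∃ n, sol.y i n ≠ 0

/-- The system is irreducible. -/
def GFSol.Irreducible {S : PosSystem m} (sol : GFSol S) : Prop :=
  IsWF S ∧ sol.ZeroFree ∧ StronglyConnected S

/-- `τ_i = lim_{x→ρ⁻} Y_i(x) ∈ [0,+∞]`, as a monotone supremum. -/
noncomputable def GFSol.tau {S : PosSystem m} (sol : GFSol S) (i : Fin m) : ℝ≥0∞ :=
  ⨆ (x : ℝ) (_ : 0 ≤ x) (_ : ENNReal.ofReal x < sol.rad), ENNReal.ofReal (eval sol.y x i)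

/-- The Newton iterates at `a`. -/
noncomputable def newton (S : PosSystem m) (a : ℝ) : ℕ → Fin m → ℝ
  | 0 => 0
  | n + 1 =>
      newton S a n +
        ((1 - jac S (vec a (newton S a n)))⁻¹).mulVec
          (Hval S (vec a (newton S a n)) - newton S a n)

/-- The Newton step at `y^{[k]}` is legitimate, so that `y^{[k+1]}` is defined. -/
def NewtonStepOK (S : PosSystem m) (a : ℝ) (k : ℕ) : Prop :=
  ConvAt S (vec a (newton S a k)) ∧ JacConvAt S (vec a (newton S a k)) ∧
    IsUnit (1 - jac S (vec a (newton S a k))).det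

/-- The characteristic map `F(z,Y) = (Y − H(z,Y), det(I − ∂H/∂Y(z,Y)))`. -/
noncomputable def fchar (S : PosSystem m) (x : Fin (m + 1) → ℝ) : Fin (m + 1) → ℝ :=
  Fin.snoc (fun i : Fin m => x i.succ - Hval S x i) ((1 - jac S x).det)

/-- The Jacobian matrix of the characteristic map. -/
noncomputable def jchar (S : PosSystem m) (x : Fin (m + 1) → ℝ) :
    Matrix (Fin (m + 1)) (Fin (m + 1)) ℝ :=
  Matrix.of fun i j => fderiv ℝ (fchar S) x (Pi.single j (1 : ℝ)) i

/-- The map `F(z,Y) = (Y − H(z,Y), Y₁ − 1)`. -/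
noncomputable def fone (S : PosSystem m) (x : Fin (m + 1) → ℝ) : Fin (m + 1) → ℝ :=
  Fin.snoc (fun i : Fin m => x i.succ - Hval S x i) (x 1 - 1)

/-- The Jacobian matrix of `fone`. -/
noncomputable def jone (S : PosSystem m) (x : Fin (m + 1) → ℝ) :
    Matrix (Fin (m + 1)) (Fin (m + 1)) ℝ :=
  Matrix.of fun i j => fderiv ℝ (fone S) x (Pi.single j (1 : ℝ)) i

/-- Term of the Jacobian entries at a complex point. -/
def jacTermC (S : PosSystem m) (i j : Fin m) (x : Fin (m + 1) → ℂ)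
    (d : Fin (m + 1) → ℕ) : ℂ :=
  (S.c i d : ℂ) * (d j.succ : ℂ) * ∏ k, x k ^ (if k = j.succ then d k - 1 else d k)

/-- The Jacobian matrix at a complex point. -/
noncomputable def jacC (S : PosSystem m) (x : Fin (m + 1) → ℂ) : Matrix (Fin m) (Fin m) ℂ :=
  Matrix.of fun i j => ∑' d, jacTermC S i j x d

/-- Evaluation of the solution at a complex point. -/
noncomputable def evalC (y : Fin m → ℕ → ℝ) (w : ℂ) : Fin m → ℂ :=
  fun i => ∑' n, (y i n : ℂ) * w ^ n

/-- `α` (on the circle `|w| = ρ`) is a singularity of the solution: some coordinate admits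
no analytic continuation to a neighborhood of `α`. -/
def IsSingularity {S : PosSystem m} (sol : GFSol S) (ρ : ℝ) (α : ℂ) : Prop :=
  ∃ i : Fin m, ¬ ∃ (U : Set ℂ) (g : ℂ → ℂ), IsOpen U ∧ α ∈ U ∧
    (∀ w ∈ U, AnalyticAt ℂ g w) ∧ ∀ w ∈ U ∩ Metric.ball (0 : ℂ) ρ, g w = evalC sol.y w i

/-- `q` is the period of the power series with coefficient sequence `a`: the differences of
elements of the support generate the subgroup `qℤ` of `ℤ`. -/
def HasPeriod (a : ℕ → ℝ) (q : ℕ) : Prop :=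
  (∀ n n' : ℕ, a n ≠ 0 → a n' ≠ 0 → (q : ℤ) ∣ (n : ℤ) - (n' : ℤ)) ∧
    ∀ q' : ℕ, (∀ n n' : ℕ, a n ≠ 0 → a n' ≠ 0 → (q' : ℤ) ∣ (n : ℤ) - (n' : ℤ)) → q' ∣ q

/-- Valuation: index of the first nonzero coefficient. -/
noncomputable def sVal (a : ℕ → ℝ) : ℕ := sInf {n | a n ≠ 0}

section Statement12Aux

variable {S : PosSystem m} (sol : GFSol S)

lemma rad_def : sol.rad = ⨅ i, radius (sol.y i) := rfl

lemma summable_eval {x : ℝ} (hx : 0 ≤ x) (hxr : ENNReal.ofReal x < sol.rad) (i : Fin m) :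
    Summable fun n => sol.y i n * x ^ n := by
  have h1 : ENNReal.ofReal x < radius (sol.y i) := lt_of_lt_of_le hxr (iInf_le _ i)
  rw [radius] at h1
  obtain ⟨r, hr⟩ := lt_iSup_iff.mp h1
  obtain ⟨hs, hlt⟩ := lt_iSup_iff.mp hr
  have hxlt : x < (r : ℝ) := by
    rwa [ENNReal.ofReal_lt_iff_lt_toReal hx ENNReal.coe_ne_top, ENNReal.coe_toReal] at hlt
  refine Summable.of_nonneg_of_le (fun n => mul_nonneg (sol.nonneg i n) (pow_nonneg hx n))
    (fun n => ?_) hs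
  calc sol.y i n * x ^ n ≤ |sol.y i n| * (r : ℝ) ^ n := by
        apply mul_le_mul (le_abs_self _) (pow_le_pow_left₀ hx hxlt.le n)
          (pow_nonneg hx n) (abs_nonneg _)
  _ = |sol.y i n| * (r : ℝ) ^ n := rfl

lemma eval_nonneg {x : ℝ} (hx : 0 ≤ x) (i : Fin m) : 0 ≤ eval sol.y x i :=
  tsum_nonneg fun n => mul_nonneg (sol.nonneg i n) (pow_nonneg hx n)

lemma eval_mono {x x' : ℝ} (hx : 0 ≤ x) (hxx : x ≤ x')
    (hxr : ENNReal.ofReal x' < sol.rad) (i : Fin m) :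
    eval sol.y x i ≤ eval sol.y x' i := by
  have hx'0 : 0 ≤ x' := hx.trans hxx
  have hxr0 : ENNReal.ofReal x < sol.rad := lt_of_le_of_lt (ENNReal.ofReal_le_ofReal hxx) hxr
  exact Summable.tsum_le_tsum
    (fun n => mul_le_mul_of_nonneg_left (pow_le_pow_left₀ hx hxx n) (sol.nonneg i n))
    (summable_eval sol hx hxr0 i) (summable_eval sol hx'0 hxr i)

lemma eval_pos (hzf : sol.ZeroFree) {x : ℝ} (hx : 0 < x)
    (hxr : ENNReal.ofReal x < sol.rad) (i : Fin m) : 0 < eval sol.y x i := by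
  obtain ⟨n, hn⟩ := hzf i
  have hs := summable_eval sol hx.le hxr i
  have h1 : sol.y i n * x ^ n ≤ eval sol.y x i :=
    Summable.le_tsum hs n fun j _ => mul_nonneg (sol.nonneg i j) (pow_nonneg hx.le j)
  have h2 : 0 < sol.y i n * x ^ n :=
    mul_pos ((sol.nonneg i n).lt_of_ne (Ne.symm hn)) (pow_pos hx n)
  linarith

lemma term_lower {x : ℝ} (hx : 0 ≤ x) (hxr : ENNReal.ofReal x < sol.rad)
    (i : Fin m) (d : Fin (m + 1) → ℕ) :
    S.c i d * (x ^ d 0 * ∏ j, eval sol.y x j ^ d j.succ) ≤ eval sol.y x i := by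
  have hconv := sol.conv x hx hxr
  have hfix := sol.fixed x hx hxr
  have hvecnn : ∀ k, 0 ≤ vec x (eval sol.y x) k := by
    intro k
    refine Fin.cases ?_ (fun j => ?_) k
    · simpa [vec] using hx
    · simpa [vec] using eval_nonneg sol hx j
  have hsum : Summable (term S i (vec x (eval sol.y x))) := (hconv i).of_abs
  have hle : term S i (vec x (eval sol.y x)) d ≤ Hval S (vec x (eval sol.y x)) i :=
    Summable.le_tsum hsum d fun d' _ =>
      mul_nonneg (S.nonneg i d') (Finset.prod_nonneg fun k _ => pow_nonneg (hvecnn k) _)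
  have heq : term S i (vec x (eval sol.y x)) d
      = S.c i d * (x ^ d 0 * ∏ j, eval sol.y x j ^ d j.succ) := by
    unfold term vec
    rw [Fin.prod_univ_succ]
    simp
  rw [← heq]
  calc term S i (vec x (eval sol.y x)) d ≤ Hval S (vec x (eval sol.y x)) i := hle
  _ = eval sol.y x i := by rw [← hfix]

lemma depends_exists_coeff {i j : Fin m} (hij : DependsOn S i j) :
    ∃ d : Fin (m + 1) → ℕ, 0 < S.c i d ∧ 1 ≤ d j.succ := by
  obtain ⟨xw, _, _, hjac⟩ := hij
  have hd : ∃ d, jacTerm S i j xw d ≠ 0 := by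
    by_contra h
    push_neg at h
    apply hjac
    show (∑' d, jacTerm S i j xw d) = 0
    simp only [h, tsum_zero]
  obtain ⟨d, hd⟩ := hd
  have hc : S.c i d ≠ 0 := by intro h; apply hd; simp [jacTerm, h]
  have hdj : d j.succ ≠ 0 := by intro h; apply hd; simp [jacTerm, h]
  exact ⟨d, (S.nonneg i d).lt_of_ne (Ne.symm hc), Nat.one_le_iff_ne_zero.mpr hdj⟩

lemma edge_bound (hzf : sol.ZeroFree) {i j : Fin m} (hij : DependsOn S i j)
    {x0 : ℝ} (hx0 : 0 < x0) (h0 : ENNReal.ofReal x0 < sol.rad) :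
    ∃ C : ℝ, 0 < C ∧ ∀ x, x0 ≤ x → ENNReal.ofReal x < sol.rad →
      C * eval sol.y x j ≤ eval sol.y x i := by
  obtain ⟨d, hc, hdj⟩ := depends_exists_coeff hij
  set a : Fin m → ℝ := eval sol.y x0 with ha
  have hapos : ∀ k, 0 < a k := fun k => eval_pos sol hzf hx0 h0 k
  set C := S.c i d * x0 ^ d 0 *
    (a j ^ (d j.succ - 1) * ∏ k ∈ Finset.univ.erase j, a k ^ d k.succ) with hC
  refine ⟨C, ?_, ?_⟩
  · apply mul_pos (mul_pos hc (pow_pos hx0 _))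
    exact mul_pos (pow_pos (hapos j) _)
      (Finset.prod_pos fun k _ => pow_pos (hapos k) _)
  · intro x hx hxr
    have hxpos : 0 < x := lt_of_lt_of_le hx0 hx
    have hmono : ∀ k, a k ≤ eval sol.y x k := fun k => eval_mono sol hx0.le hx hxr k
    have hYnn : ∀ k, 0 ≤ eval sol.y x k := fun k => eval_nonneg sol hxpos.le k
    -- key pointwise product bound
    have hprod : (a j ^ (d j.succ - 1) * ∏ k ∈ Finset.univ.erase j, a k ^ d k.succ) *
        eval sol.y x j ≤ ∏ k, eval sol.y x k ^ d k.succ := by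
      rw [← Finset.mul_prod_erase Finset.univ _ (Finset.mem_univ j)]
      have h1 : a j ^ (d j.succ - 1) * eval sol.y x j ≤ eval sol.y x j ^ d j.succ := by
        calc a j ^ (d j.succ - 1) * eval sol.y x j
            ≤ eval sol.y x j ^ (d j.succ - 1) * eval sol.y x j := by
              apply mul_le_mul_of_nonneg_right
                (pow_le_pow_left₀ (hapos j).le (hmono j) _) (hYnn j)
        _ = eval sol.y x j ^ (d j.succ - 1 + 1) := by rw [pow_succ]
        _ = eval sol.y x j ^ d j.succ := by rw [Nat.sub_add_cancel hdj]
      have h2 : ∏ k ∈ Finset.univ.erase j, a k ^ d k.succ ≤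
          ∏ k ∈ Finset.univ.erase j, eval sol.y x k ^ d k.succ :=
        Finset.prod_le_prod (fun k _ => pow_nonneg (hapos k).le _)
          (fun k _ => pow_le_pow_left₀ (hapos k).le (hmono k) _)
      calc (a j ^ (d j.succ - 1) * ∏ k ∈ Finset.univ.erase j, a k ^ d k.succ) *
            eval sol.y x j
          = (a j ^ (d j.succ - 1) * eval sol.y x j) *
            ∏ k ∈ Finset.univ.erase j, a k ^ d k.succ := by ring
      _ ≤ (eval sol.y x j ^ d j.succ) * ∏ k ∈ Finset.univ.erase j, eval sol.y x k ^ d k.succ := by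
          apply mul_le_mul h1 h2
            (Finset.prod_nonneg fun k _ => pow_nonneg (hapos k).le _)
            (pow_nonneg (hYnn j) _)
    calc C * eval sol.y x j
        = S.c i d * (x0 ^ d 0 *
          ((a j ^ (d j.succ - 1) * ∏ k ∈ Finset.univ.erase j, a k ^ d k.succ) *
            eval sol.y x j)) := by rw [hC]; ring
    _ ≤ S.c i d * (x ^ d 0 * ∏ k, eval sol.y x k ^ d k.succ) := by
        apply mul_le_mul_of_nonneg_left _ hc.le
        apply mul_le_mul (pow_le_pow_left₀ hx0.le hx _) hprod
          (mul_nonneg (mul_nonneg (pow_nonneg (hapos j).le _)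
            (Finset.prod_nonneg fun k _ => pow_nonneg (hapos k).le _)) (hYnn j))
          (pow_nonneg hxpos.le _)
    _ ≤ eval sol.y x i := term_lower sol hxpos.le hxr i d

lemma chain_bound_aux (hzf : sol.ZeroFree) {x0 : ℝ} (hx0 : 0 < x0)
    (h0 : ENNReal.ofReal x0 < sol.rad) :
    ∀ (k : ℕ) (p : Fin (k + 1) → Fin m),
      (∀ t : Fin k, DependsOn S (p t.castSucc) (p t.succ)) →
      ∃ C : ℝ, 0 < C ∧ ∀ x, x0 ≤ x → ENNReal.ofReal x < sol.rad →
        C * eval sol.y x (p (Fin.last k)) ≤ eval sol.y x (p 0) := by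
  intro k
  induction k with
  | zero =>
    intro p _
    exact ⟨1, one_pos, fun x hx hxr => by simp [Fin.last]⟩
  | succ k ih =>
    intro p hpe
    have hedge : DependsOn S (p 0) (p 1) := by
      have := hpe 0
      simpa using this
    obtain ⟨C1, hC1, h1⟩ := edge_bound sol hzf hedge hx0 h0
    obtain ⟨C2, hC2, h2⟩ := ih (p ∘ Fin.succ) (fun t => by
      have := hpe t.succ
      exact this)
    refine ⟨C1 * C2, mul_pos hC1 hC2, fun x hx hxr => ?_⟩
    have hq0 : (p ∘ Fin.succ) 0 = p 1 := by simp
    have hql : (p ∘ Fin.succ) (Fin.last k) = p (Fin.last (k + 1)) := by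
      simp [Function.comp, Fin.succ_last]
    have h2' := h2 x hx hxr
    rw [hq0, hql] at h2'
    calc C1 * C2 * eval sol.y x (p (Fin.last (k + 1)))
        = C1 * (C2 * eval sol.y x (p (Fin.last (k + 1)))) := by ring
    _ ≤ C1 * eval sol.y x (p 1) := mul_le_mul_of_nonneg_left h2' hC1.le
    _ ≤ eval sol.y x (p 0) := h1 x hx hxr

lemma chain_bound (hzf : sol.ZeroFree) (hsc : StronglyConnected S) (i j : Fin m)
    {x0 : ℝ} (hx0 : 0 < x0) (h0 : ENNReal.ofReal x0 < sol.rad) :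
    ∃ C : ℝ, 0 < C ∧ ∀ x, x0 ≤ x → ENNReal.ofReal x < sol.rad →
      C * eval sol.y x j ≤ eval sol.y x i := by
  obtain ⟨k, _, p, hp0, hpl, hpe⟩ := hsc i j
  obtain ⟨C, hC, h⟩ := chain_bound_aux sol hzf hx0 h0 k p hpe
  exact ⟨C, hC, fun x hx hxr => by rw [← hp0, ← hpl]; exact h x hx hxr⟩

/-- Boundedness of a coordinate on the domain. -/
def GFBdd (sol : GFSol S) (i : Fin m) : Prop :=
  ∃ M : ℝ, ∀ x : ℝ, 0 ≤ x → ENNReal.ofReal x < sol.rad → eval sol.y x i ≤ M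

lemma exists_x0 : ∃ x0 : ℝ, 0 < x0 ∧ ENNReal.ofReal x0 < sol.rad := by
  rcases eq_or_ne sol.rad ⊤ with h | h
  · exact ⟨1, one_pos, by simp [h]⟩
  · have hpos : 0 < sol.rad.toReal := ENNReal.toReal_pos (ne_of_gt sol.rad_pos) h
    refine ⟨sol.rad.toReal / 2, by linarith, ?_⟩
    rw [ENNReal.ofReal_lt_iff_lt_toReal (by linarith) h]
    linarith

lemma bdd_transfer (hzf : sol.ZeroFree) (hsc : StronglyConnected S) {i j : Fin m}
    (hj : GFBdd sol j) : GFBdd sol i := by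
  obtain ⟨x0, hx0, h0⟩ := exists_x0 sol
  obtain ⟨M, hM⟩ := hj
  obtain ⟨C, hC, h⟩ := chain_bound sol hzf hsc j i hx0 h0
  refine ⟨max (M / C) (eval sol.y x0 i), fun x hx hxr => ?_⟩
  rcases le_or_gt x0 x with hle | hlt
  · have h1 := h x hle hxr
    have h2 := hM x hx hxr
    have : eval sol.y x i ≤ M / C := by
      rw [le_div_iff₀ hC]
      calc eval sol.y x i * C = C * eval sol.y x i := by ring
      _ ≤ eval sol.y x j := h1
      _ ≤ M := h2
    exact this.trans (le_max_left _ _)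
  · exact (eval_mono sol hx hlt.le h0 i).trans (le_max_right _ _)

lemma tendsto_top_of_unbdd {l : Filter ℝ}
    (hev : ∀ x0 : ℝ, 0 ≤ x0 → ENNReal.ofReal x0 < sol.rad →
      ∀ᶠ x in l, x0 ≤ x ∧ ENNReal.ofReal x < sol.rad)
    (i : Fin m) (hunb : ¬ GFBdd sol i) :
    Tendsto (fun x => eval sol.y x i) l atTop := by
  rw [tendsto_atTop]
  intro M
  rw [GFBdd] at hunb
  push_neg at hunb
  obtain ⟨x, hx0, hxr, hM⟩ := hunb M
  filter_upwards [hev x hx0 hxr] with x' hx'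
  exact hM.le.trans (eval_mono sol hx0 hx'.1 hx'.2 i)

lemma linear_of_tendsto_top (hzf : sol.ZeroFree) (hsc : StronglyConnected S)
    {l : Filter ℝ} [l.NeBot]
    (hev : ∀ x0 : ℝ, 0 ≤ x0 → ENNReal.ofReal x0 < sol.rad →
      ∀ᶠ x in l, x0 ≤ x ∧ ENNReal.ofReal x < sol.rad)
    (htop : ∀ i, Tendsto (fun x => eval sol.y x i) l atTop) :
    IsLinear S := by
  by_contra hlin
  rw [IsLinear] at hlin
  push_neg at hlin
  obtain ⟨i0, d, hdeg, hc0⟩ := hlin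
  have hc : 0 < S.c i0 d := (S.nonneg i0 d).lt_of_ne (Ne.symm hc0)
  obtain ⟨x0, hx0, h0⟩ := exists_x0 sol
  choose C hCpos hC using fun j => chain_bound sol hzf hsc j i0 hx0 h0
  set K : ℝ := ∏ j, C j ^ d j.succ with hK
  have hKpos : 0 < K := Finset.prod_pos fun j _ => pow_pos (hCpos j) _
  set κ := S.c i0 d * x0 ^ d 0 * K with hκdef
  have hκ : 0 < κ := mul_pos (mul_pos hc (pow_pos hx0 _)) hKpos
  have hbad : ∀ᶠ x in l, False := by
    filter_upwards [hev x0 hx0.le h0,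
      (htop i0).eventually_ge_atTop (max 1 (2 / κ))] with x hx ht
    obtain ⟨hxx0, hxr⟩ := hx
    set t := eval sol.y x i0 with htdef
    have ht1 : 1 ≤ t := le_trans (le_max_left _ _) ht
    have ht2 : 2 / κ ≤ t := le_trans (le_max_right _ _) ht
    have hkey : κ * t ^ 2 ≤ t := by
      have hstep : K * t ^ 2 ≤ ∏ j, eval sol.y x j ^ d j.succ := by
        calc K * t ^ 2 ≤ K * t ^ (∑ j : Fin m, d j.succ) := by
              apply mul_le_mul_of_nonneg_left (pow_le_pow_right₀ ht1 hdeg) hKpos.le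
        _ = ∏ j, (C j * t) ^ d j.succ := by
            simp only [hK, mul_pow, Finset.prod_mul_distrib, Finset.prod_pow_eq_pow_sum]
        _ ≤ ∏ j, eval sol.y x j ^ d j.succ := by
            apply Finset.prod_le_prod
              (fun j _ => pow_nonneg (mul_nonneg (hCpos j).le (by linarith)) _)
              (fun j _ => pow_le_pow_left₀ (mul_nonneg (hCpos j).le (by linarith))
                (hC j x hxx0 hxr) _)
      calc κ * t ^ 2 = S.c i0 d * (x0 ^ d 0 * (K * t ^ 2)) := by rw [hκdef]; ring
      _ ≤ S.c i0 d * (x ^ d 0 * ∏ j, eval sol.y x j ^ d j.succ) := by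
          apply mul_le_mul_of_nonneg_left _ hc.le
          apply mul_le_mul (pow_le_pow_left₀ hx0.le hxx0 _) hstep
            (mul_nonneg hKpos.le (by positivity))
            (pow_nonneg (by linarith) _)
      _ ≤ eval sol.y x i0 := term_lower sol (by linarith) hxr i0 d
    have h4 : 2 ≤ t * κ := (div_le_iff₀ hκ).mp ht2
    nlinarith
  exact absurd (hbad.exists) (by simp)

lemma toReal_mem_iff {x : ℝ} (hne : sol.rad ≠ ⊤) (hx : 0 ≤ x) :
    (ENNReal.ofReal x < sol.rad ↔ x < sol.rad.toReal) :=
  ENNReal.ofReal_lt_iff_lt_toReal hx hne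

lemma hev_finite (hne : sol.rad ≠ ⊤) :
    ∀ x0 : ℝ, 0 ≤ x0 → ENNReal.ofReal x0 < sol.rad →
      ∀ᶠ x in 𝓝[<] sol.rad.toReal, x0 ≤ x ∧ ENNReal.ofReal x < sol.rad := by
  intro x0 hx0 h0
  have hx0ρ : x0 < sol.rad.toReal := (toReal_mem_iff sol hne hx0).mp h0
  filter_upwards [Ioo_mem_nhdsLT_of_mem (Set.mem_Ioc.mpr ⟨hx0ρ, le_refl _⟩)] with x hx
  refine ⟨hx.1.le, ?_⟩
  exact (toReal_mem_iff sol hne (hx0.trans hx.1.le)).mpr hx.2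

lemma hev_top (htop : sol.rad = ⊤) :
    ∀ x0 : ℝ, 0 ≤ x0 → ENNReal.ofReal x0 < sol.rad →
      ∀ᶠ x in atTop, x0 ≤ x ∧ ENNReal.ofReal x < sol.rad := by
  intro x0 _ _
  filter_upwards [eventually_ge_atTop x0] with x hx
  exact ⟨hx, by simp [htop]⟩

lemma tendsto_lim_finite (hne : sol.rad ≠ ⊤) (i : Fin m) (hb : GFBdd sol i) :
    ∃ L : ℝ, Tendsto (fun x => eval sol.y x i) (𝓝[<] sol.rad.toReal) (𝓝 L) := by
  have hρpos : 0 < sol.rad.toReal := ENNReal.toReal_pos (ne_of_gt sol.rad_pos) hne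
  obtain ⟨M, hM⟩ := hb
  set g : ℝ → ℝ := fun x => eval sol.y (max x 0) i with hg
  have hmem : ∀ x : ℝ, x < sol.rad.toReal → ENNReal.ofReal (max x 0) < sol.rad := by
    intro x hx
    exact (toReal_mem_iff sol hne (le_max_right _ _)).mpr (max_lt hx hρpos)
  have hmono : MonotoneOn g (Set.Iio sol.rad.toReal) := by
    intro x hx x' hx' hxx
    exact eval_mono sol (le_max_right _ _) (max_le_max hxx (le_refl 0)) (hmem x' hx') i
  have hbdd : BddAbove (g '' Set.Iio sol.rad.toReal) := by
    refine ⟨M, fun z hz => ?_⟩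
    obtain ⟨x, hx, rfl⟩ := hz
    exact hM _ (le_max_right _ _) (hmem x hx)
  refine ⟨sSup (g '' Set.Iio sol.rad.toReal), ?_⟩
  have hg_tendsto := hmono.tendsto_nhdsLT hbdd
  refine hg_tendsto.congr' ?_
  filter_upwards [Ioo_mem_nhdsLT_of_mem (Set.mem_Ioc.mpr ⟨hρpos, le_refl _⟩)] with x hx
  simp [hg, max_eq_left hx.1.le]

lemma tendsto_lim_top (htopr : sol.rad = ⊤) (i : Fin m) (hb : GFBdd sol i) :
    ∃ L : ℝ, Tendsto (fun x => eval sol.y x i) atTop (𝓝 L) := by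
  obtain ⟨M, hM⟩ := hb
  set g : ℝ → ℝ := fun x => eval sol.y (max x 0) i with hg
  have hmem : ∀ x : ℝ, ENNReal.ofReal (max x 0) < sol.rad := by
    intro x; simp [htopr]
  have hmono : Monotone g := fun x x' hxx =>
    eval_mono sol (le_max_right _ _) (max_le_max hxx (le_refl 0)) (hmem x') i
  have hbdd : BddAbove (Set.range g) := by
    refine ⟨M, fun z hz => ?_⟩
    obtain ⟨x, rfl⟩ := hz
    exact hM _ (le_max_right _ _) (hmem x)
  refine ⟨⨆ x, g x, ?_⟩
  refine (tendsto_atTop_ciSup hmono hbdd).congr' ?_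
  filter_upwards [eventually_ge_atTop (0 : ℝ)] with x hx
  simp [hg, max_eq_left hx]

end Statement12Aux

/-- For an irreducible system, as `x → ρ⁻` either all coordinates of the
solution tend to `+∞`, or all have a finite limit; the first alternative forces linearity. -/
theorem statement12 (m : ℕ) (hm : 1 ≤ m) (S : PosSystem m) (sol : GFSol S)
    (hirr : sol.Irreducible) :
    (sol.rad ≠ ⊤ →
      ((∀ i, Tendsto (fun x => eval sol.y x i) (𝓝[<] sol.rad.toReal) atTop) ∨
        (∀ i, ∃ L : ℝ, Tendsto (fun x => eval sol.y x i) (𝓝[<] sol.rad.toReal) (𝓝 L))) ∧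
      ((∀ i, Tendsto (fun x => eval sol.y x i) (𝓝[<] sol.rad.toReal) atTop) → IsLinear S)) ∧
    (sol.rad = ⊤ →
      ((∀ i, Tendsto (fun x => eval sol.y x i) atTop atTop) ∨
        (∀ i, ∃ L : ℝ, Tendsto (fun x => eval sol.y x i) atTop (𝓝 L))) ∧
      ((∀ i, Tendsto (fun x => eval sol.y x i) atTop atTop) → IsLinear S)) := by
  obtain ⟨hwf, hzf, hsc⟩ := hirr
  constructor
  · intro hne
    have hev := hev_finite sol hne
    refine ⟨?_, fun htop => linear_of_tendsto_top sol hzf hsc hev htop⟩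
    by_cases hB : ∀ i, GFBdd sol i
    · exact Or.inr fun i => tendsto_lim_finite sol hne i (hB i)
    · push_neg at hB
      obtain ⟨j, hj⟩ := hB
      refine Or.inl fun i => tendsto_top_of_unbdd sol hev i fun hbi => ?_
      exact hj (bdd_transfer sol hzf hsc hbi)
  · intro htopr
    have hev := hev_top sol htopr
    refine ⟨?_, fun htop => linear_of_tendsto_top sol hzf hsc hev htop⟩
    by_cases hB : ∀ i, GFBdd sol i
    · exact Or.inr fun i => tendsto_lim_top sol htopr i (hB i)
    · push_neg at hB
      obtain ⟨j, hj⟩ := hB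
      refine Or.inl fun i => tendsto_top_of_unbdd sol hev i fun hbi => ?_
      exact hj (bdd_transfer sol hzf hsc hbi)

end AnalyticComb
end

section
/- Let H be an irreducible positive analytic system with generating function solution Y and radius of convergence ρ < ∞. Assume each series Y_i converges absolutely on the closed complex disc |w| ≤ ρ and that the entries of ∂H/∂Y converge absolutely at (ρ,Y(ρ)); for |w| ≤ ρ let J(w) := ∂H/∂Y(w,Y(w)) (an m×m complex matrix, defined by absolute convergence, its series being dominated by those at (ρ,Y(ρ))). If α ∈ ℂ with |α| = ρ is a singularity of the solution Y, then Λ_H(α,Y(α)) ≤ Λ_H(ρ,Y(ρ)) ≤ 1; and if Λ_H(α,Y(α)) = 1, then |J(α)_{ij}| = J(ρ)_{ij} for all i,j ∈ {1,…,m}. -/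
open scoped ENNReal NNReal Topology
open Filter

namespace AnalyticComb

variable {m : ℕ}

section AuxMatrix

attribute [local instance] Matrix.linftyOpNormedRing Matrix.linftyOpNormedAlgebra

section MatrixAux

variable {n : ℕ}

lemma tendsto_ofReal_rpow_one_div {a : ℝ} (ha : 0 < a) :
    Tendsto (fun N : ℕ => (ENNReal.ofReal a) ^ (1 / (N : ℝ))) atTop (𝓝 1) := by
  have h1 : Tendsto (fun N : ℕ => a ^ (1 / (N : ℝ))) atTop (𝓝 1) := by
    have hlog : Tendsto (fun N : ℕ => Real.log a * (1 / (N : ℝ))) atTop (𝓝 0) := by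
      simpa using (tendsto_one_div_atTop_nhds_zero_nat).const_mul (Real.log a)
    have := (Real.continuous_exp.tendsto 0).comp hlog
    simp only [Real.exp_zero] at this
    refine this.congr fun N => ?_
    rw [Function.comp_apply, Real.rpow_def_of_pos ha]
  have h2 : Tendsto (fun N : ℕ => ENNReal.ofReal (a ^ (1 / (N : ℝ)))) atTop (𝓝 1) := by
    have := ENNReal.tendsto_ofReal h1
    simpa using this
  refine h2.congr fun N => ?_
  rw [← ENNReal.ofReal_rpow_of_pos ha]

lemma pow_entries_nonneg (B : Matrix (Fin n) (Fin n) ℝ) (hB : ∀ i j, 0 ≤ B i j) :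
    ∀ (N : ℕ) i j, 0 ≤ (B ^ N) i j := by
  intro N
  induction N with
  | zero => intro i j; simp [Matrix.one_apply]; split <;> norm_num
  | succ N ih =>
      intro i j
      rw [pow_succ, Matrix.mul_apply]
      exact Finset.sum_nonneg fun k _ => mul_nonneg (ih i k) (hB k j)

lemma pow_entries_norm_le {A : Matrix (Fin n) (Fin n) ℂ} {B : Matrix (Fin n) (Fin n) ℝ}
    (h : ∀ i j, ‖A i j‖ ≤ B i j) : ∀ (N : ℕ) i j, ‖(A ^ N) i j‖ ≤ (B ^ N) i j := by
  have hB : ∀ i j, 0 ≤ B i j := fun i j => (norm_nonneg _).trans (h i j)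
  intro N
  induction N with
  | zero =>
      intro i j
      simp only [pow_zero, Matrix.one_apply]
      split <;> simp
  | succ N ih =>
      intro i j
      rw [pow_succ, pow_succ, Matrix.mul_apply, Matrix.mul_apply]
      calc ‖∑ k, (A ^ N) i k * A k j‖ ≤ ∑ k, ‖(A ^ N) i k * A k j‖ := norm_sum_le _ _
        _ ≤ ∑ k, (B ^ N) i k * B k j := by
            refine Finset.sum_le_sum fun k _ => ?_
            rw [norm_mul]
            exact mul_le_mul (ih i k) (h k j) (norm_nonneg _)
              (pow_entries_nonneg B hB N i k)

lemma map_pow_ofReal (B : Matrix (Fin n) (Fin n) ℝ) (N : ℕ) :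
    (B.map Complex.ofReal) ^ N = (B ^ N).map Complex.ofReal := by
  have : B.map Complex.ofReal = Complex.ofRealHom.mapMatrix B := rfl
  rw [this, ← map_pow]
  rfl

lemma nnnorm_le_of_entries_nnnorm_le {M M' : Matrix (Fin n) (Fin n) ℂ}
    (h : ∀ i j, ‖M i j‖ ≤ ‖M' i j‖) : ‖M‖₊ ≤ ‖M'‖₊ := by
  rw [Matrix.linfty_opNNNorm_def, Matrix.linfty_opNNNorm_def]
  refine Finset.sup_mono_fun fun i _ => Finset.sum_le_sum fun j _ => ?_
  exact h i j

/-- Comparison of spectral radii from entrywise norm domination. -/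
lemma specRad_le_specRad_of_entries {A : Matrix (Fin n) (Fin n) ℂ}
    {B : Matrix (Fin n) (Fin n) ℝ} (h : ∀ i j, ‖A i j‖ ≤ B i j) :
    spectralRadius ℂ A ≤ spectralRadius ℂ (B.map Complex.ofReal) := by
  have hB : ∀ i j, 0 ≤ B i j := fun i j => (norm_nonneg _).trans (h i j)
  refine le_of_tendsto_of_tendsto'
    (spectrum.pow_nnnorm_pow_one_div_tendsto_nhds_spectralRadius A)
    (spectrum.pow_nnnorm_pow_one_div_tendsto_nhds_spectralRadius (B.map Complex.ofReal))
    fun N => ?_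
  have hnorm : ‖A ^ N‖₊ ≤ ‖(B.map Complex.ofReal) ^ N‖₊ := by
    rw [map_pow_ofReal]
    refine nnnorm_le_of_entries_nnnorm_le fun i j => ?_
    have := pow_entries_norm_le h N i j
    simpa [Matrix.map_apply, Complex.norm_real,
      abs_of_nonneg (pow_entries_nonneg B hB N i j)] using this
  exact ENNReal.rpow_le_rpow (by exact_mod_cast hnorm) (by positivity)

lemma mulVec_apply' (B : Matrix (Fin n) (Fin n) ℝ) (u : Fin n → ℝ) (i : Fin n) :
    B.mulVec u i = ∑ j, B i j * u j := rfl

lemma mulVec_le_mulVec {B : Matrix (Fin n) (Fin n) ℝ} (hB : ∀ i j, 0 ≤ B i j)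
    {u v : Fin n → ℝ} (h : ∀ i, u i ≤ v i) : ∀ i, B.mulVec u i ≤ B.mulVec v i := by
  intro i
  rw [mulVec_apply', mulVec_apply']
  exact Finset.sum_le_sum fun j _ => mul_le_mul_of_nonneg_left (h j) (hB i j)

lemma mulVec_nonneg {B : Matrix (Fin n) (Fin n) ℝ} (hB : ∀ i j, 0 ≤ B i j)
    {u : Fin n → ℝ} (hu : ∀ i, 0 ≤ u i) : ∀ i, 0 ≤ B.mulVec u i := fun i => by
  rw [mulVec_apply']
  exact Finset.sum_nonneg fun j _ => mul_nonneg (hB i j) (hu j)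

lemma single_le_mulVec {B : Matrix (Fin n) (Fin n) ℝ} (hB : ∀ i j, 0 ≤ B i j)
    {u : Fin n → ℝ} (hu : ∀ i, 0 ≤ u i) (i j : Fin n) : B i j * u j ≤ B.mulVec u i := by
  rw [mulVec_apply']
  exact Finset.single_le_sum (fun k _ => mul_nonneg (hB i k) (hu k)) (Finset.mem_univ j)

/-- If `B ≥ 0`, `w > 0` and `B w ≤ c w`, then the spectral radius of `B` is at most `c`. -/
lemma specRad_le_of_subinvariant [NeZero n] {B : Matrix (Fin n) (Fin n) ℝ}
    (hB : ∀ i j, 0 ≤ B i j) {w : Fin n → ℝ} (hw : ∀ i, 0 < w i) {c : ℝ} (hc : 0 ≤ c)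
    (hsub : ∀ i, B.mulVec w i ≤ c * w i) :
    spectralRadius ℂ (B.map Complex.ofReal) ≤ ENNReal.ofReal c := by
  have hne : (Finset.univ : Finset (Fin n)).Nonempty := Finset.univ_nonempty
  set wmax : ℝ := Finset.univ.sup' hne w with hwmax
  set wmin : ℝ := Finset.univ.inf' hne w with hwmin
  have hwmin_pos : 0 < wmin := by
    obtain ⟨i, _, hi⟩ := Finset.exists_mem_eq_inf' hne w
    rw [hwmin, hi]; exact hw i
  have hwmax_pos : 0 < wmax := by
    obtain ⟨i⟩ := (inferInstance : Nonempty (Fin n))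
    exact lt_of_lt_of_le (hw i) (Finset.le_sup' w (Finset.mem_univ i))
  -- iterate: (B^N) w ≤ c^N w
  have hiter : ∀ N i, (B ^ N).mulVec w i ≤ c ^ N * w i := by
    intro N
    induction N with
    | zero => intro i; simp [Matrix.one_mulVec]
    | succ N ih =>
        intro i
        have h1 : (B ^ (N + 1)).mulVec w = (B ^ N).mulVec (B.mulVec w) := by
          rw [pow_succ, ← Matrix.mulVec_mulVec]
        rw [h1]
        have h2 : (B ^ N).mulVec (B.mulVec w) i ≤ (B ^ N).mulVec (fun j => c * w j) i :=
          mulVec_le_mulVec (pow_entries_nonneg B hB N) hsub i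
        have h3 : (B ^ N).mulVec (fun j => c * w j) i = c * (B ^ N).mulVec w i := by
          rw [mulVec_apply', mulVec_apply', Finset.mul_sum]
          exact Finset.sum_congr rfl fun j _ => by ring
        calc (B ^ N).mulVec (B.mulVec w) i ≤ c * (B ^ N).mulVec w i := h3 ▸ h2
          _ ≤ c * (c ^ N * w i) := mul_le_mul_of_nonneg_left (ih i) hc
          _ = c ^ (N + 1) * w i := by ring
  -- entry bound
  have hentry : ∀ N i j, (B ^ N) i j ≤ c ^ N * (wmax / wmin) := by
    intro N i j
    have h1 : (B ^ N) i j * w j ≤ c ^ N * w i :=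
      le_trans (single_le_mulVec (pow_entries_nonneg B hB N) (fun k => (hw k).le) i j) (hiter N i)
    have h2 : (B ^ N) i j ≤ c ^ N * w i / w j := by
      rw [le_div_iff₀ (hw j)]; exact h1
    refine h2.trans ?_
    rw [mul_div_assoc]
    refine mul_le_mul_of_nonneg_left ?_ (pow_nonneg hc N)
    exact div_le_div₀ hwmax_pos.le (Finset.le_sup' w (Finset.mem_univ i)) hwmin_pos
      (Finset.inf'_le w (Finset.mem_univ j))
  -- norm bound
  set K : ℝ := (n : ℝ) * (wmax / wmin) with hK
  have hKpos : 0 < K := by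
    have : 0 < (n : ℝ) := by exact_mod_cast Nat.pos_of_ne_zero (NeZero.ne n)
    positivity
  have hnorm : ∀ N : ℕ, (‖(B.map Complex.ofReal) ^ N‖₊ : ℝ≥0∞) ≤
      ENNReal.ofReal (K * c ^ N) := by
    intro N
    rw [map_pow_ofReal]
    have : ‖(B ^ N).map Complex.ofReal‖₊ ≤ (K * c ^ N).toNNReal := by
      rw [Matrix.linfty_opNNNorm_def]
      refine Finset.sup_le fun i _ => ?_
      have hsum : ∑ j, ‖((B ^ N).map Complex.ofReal) i j‖₊ =
          ((∑ j, (B ^ N) i j : ℝ)).toNNReal := by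
        rw [Real.toNNReal_sum_of_nonneg fun j _ => pow_entries_nonneg B hB N i j]
        refine Finset.sum_congr rfl fun j _ => ?_
        apply NNReal.coe_injective
        simp [Matrix.map_apply, Real.coe_toNNReal',
          abs_of_nonneg (pow_entries_nonneg B hB N i j),
          max_eq_left (pow_entries_nonneg B hB N i j)]
      rw [hsum]
      refine Real.toNNReal_mono ?_
      calc ∑ j, (B ^ N) i j ≤ ∑ _j : Fin n, c ^ N * (wmax / wmin) :=
            Finset.sum_le_sum fun j _ => hentry N i j
        _ = (n : ℝ) * (c ^ N * (wmax / wmin)) := by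
            rw [Finset.sum_const, Finset.card_univ, Fintype.card_fin, nsmul_eq_mul]
        _ = K * c ^ N := by rw [hK]; ring
    calc (‖(B ^ N).map Complex.ofReal‖₊ : ℝ≥0∞) ≤ ((K * c ^ N).toNNReal : ℝ≥0∞) := by
          exact_mod_cast this
      _ = ENNReal.ofReal (K * c ^ N) := rfl
  -- conclude via Gelfand
  have hlim : Tendsto (fun N : ℕ => (ENNReal.ofReal K) ^ (1 / (N : ℝ)) * ENNReal.ofReal c)
      atTop (𝓝 (ENNReal.ofReal c)) := by
    have := ENNReal.Tendsto.mul_const (b := ENNReal.ofReal c)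
      (tendsto_ofReal_rpow_one_div hKpos) (Or.inr ENNReal.ofReal_ne_top)
    simpa using this
  refine le_of_tendsto_of_tendsto
    (spectrum.pow_nnnorm_pow_one_div_tendsto_nhds_spectralRadius (B.map Complex.ofReal))
    hlim ?_
  filter_upwards [eventually_ge_atTop 1] with N hN
  calc (‖(B.map Complex.ofReal) ^ N‖₊ : ℝ≥0∞) ^ (1 / (N : ℝ))
      ≤ (ENNReal.ofReal (K * c ^ N)) ^ (1 / (N : ℝ)) :=
        ENNReal.rpow_le_rpow (hnorm N) (by positivity)
    _ = (ENNReal.ofReal K) ^ (1 / (N : ℝ)) * ENNReal.ofReal c := by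
        have h1 : ENNReal.ofReal (K * c ^ N) = ENNReal.ofReal K * (ENNReal.ofReal c) ^ N := by
          rw [ENNReal.ofReal_mul hKpos.le, ENNReal.ofReal_pow hc]
        have hN0 : (N : ℝ) ≠ 0 := by exact_mod_cast (Nat.one_le_iff_ne_zero.mp hN)
        rw [h1, ENNReal.mul_rpow_of_nonneg _ _ (by positivity),
          ← ENNReal.rpow_natCast (ENNReal.ofReal c) N, ← ENNReal.rpow_mul,
          mul_one_div, div_self hN0, ENNReal.rpow_one]

/-- If `B ≥ 0`, `v > 0` and `B v ≥ c v`, then the spectral radius of `B` is at least `c`. -/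
lemma le_specRad_of_superinvariant [NeZero n] {B : Matrix (Fin n) (Fin n) ℝ}
    (hB : ∀ i j, 0 ≤ B i j) {v : Fin n → ℝ} (hv : ∀ i, 0 < v i) {c : ℝ} (hc : 0 ≤ c)
    (hsup : ∀ i, c * v i ≤ B.mulVec v i) :
    ENNReal.ofReal c ≤ spectralRadius ℂ (B.map Complex.ofReal) := by
  have hne : (Finset.univ : Finset (Fin n)).Nonempty := Finset.univ_nonempty
  set vmax : ℝ := Finset.univ.sup' hne v with hvmax
  have hvmax_pos : 0 < vmax := by
    obtain ⟨i, _, hi⟩ := Finset.exists_mem_eq_sup' hne v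
    rw [hvmax, hi]; exact hv i
  obtain ⟨i0⟩ := (inferInstance : Nonempty (Fin n))
  have hiter : ∀ N i, c ^ N * v i ≤ (B ^ N).mulVec v i := by
    intro N
    induction N with
    | zero => intro i; simp [Matrix.one_mulVec]
    | succ N ih =>
        intro i
        have h1 : (B ^ (N + 1)).mulVec v = (B ^ N).mulVec (B.mulVec v) := by
          rw [pow_succ, ← Matrix.mulVec_mulVec]
        rw [h1]
        have h2 : (B ^ N).mulVec (fun j => c * v j) i ≤ (B ^ N).mulVec (B.mulVec v) i :=
          mulVec_le_mulVec (pow_entries_nonneg B hB N) hsup i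
        have h3 : (B ^ N).mulVec (fun j => c * v j) i = c * (B ^ N).mulVec v i := by
          rw [mulVec_apply', mulVec_apply', Finset.mul_sum]
          exact Finset.sum_congr rfl fun j _ => by ring
        calc c ^ (N + 1) * v i = c * (c ^ N * v i) := by ring
          _ ≤ c * (B ^ N).mulVec v i := mul_le_mul_of_nonneg_left (ih i) hc
          _ = (B ^ N).mulVec (fun j => c * v j) i := h3.symm
          _ ≤ (B ^ N).mulVec (B.mulVec v) i := h2
  -- norm lower bound
  set K : ℝ := v i0 / vmax with hK
  have hKpos : 0 < K := div_pos (hv i0) hvmax_pos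
  have hnorm : ∀ N : ℕ, ENNReal.ofReal (c ^ N * K) ≤ (‖(B.map Complex.ofReal) ^ N‖₊ : ℝ≥0∞) := by
    intro N
    rw [map_pow_ofReal]
    have hrow : c ^ N * v i0 ≤ (∑ j, (B ^ N) i0 j) * vmax := by
      calc c ^ N * v i0 ≤ (B ^ N).mulVec v i0 := hiter N i0
        _ = ∑ j, (B ^ N) i0 j * v j := mulVec_apply' _ _ _
        _ ≤ ∑ j, (B ^ N) i0 j * vmax :=
            Finset.sum_le_sum fun j _ => mul_le_mul_of_nonneg_left
              (Finset.le_sup' v (Finset.mem_univ j)) (pow_entries_nonneg B hB N i0 j)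
        _ = (∑ j, (B ^ N) i0 j) * vmax := by rw [Finset.sum_mul]
    have hKle : c ^ N * K ≤ ∑ j, (B ^ N) i0 j := by
      rw [hK, ← mul_div_assoc, div_le_iff₀ hvmax_pos]
      exact hrow
    have hsumle : ((∑ j, (B ^ N) i0 j : ℝ)).toNNReal ≤ ‖(B ^ N).map Complex.ofReal‖₊ := by
      rw [Matrix.linfty_opNNNorm_def]
      refine le_trans (le_of_eq ?_) (Finset.le_sup (Finset.mem_univ i0))
      rw [Real.toNNReal_sum_of_nonneg fun j _ => pow_entries_nonneg B hB N i0 j]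
      refine Finset.sum_congr rfl fun j _ => ?_
      apply NNReal.coe_injective
      simp [Matrix.map_apply, Real.coe_toNNReal',
        abs_of_nonneg (pow_entries_nonneg B hB N i0 j),
        max_eq_left (pow_entries_nonneg B hB N i0 j)]
    calc ENNReal.ofReal (c ^ N * K) ≤ ENNReal.ofReal (∑ j, (B ^ N) i0 j) :=
          ENNReal.ofReal_le_ofReal hKle
      _ = (((∑ j, (B ^ N) i0 j : ℝ)).toNNReal : ℝ≥0∞) := rfl
      _ ≤ (‖(B ^ N).map Complex.ofReal‖₊ : ℝ≥0∞) := by exact_mod_cast hsumle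
  have hlim : Tendsto (fun N : ℕ => ENNReal.ofReal c * (ENNReal.ofReal K) ^ (1 / (N : ℝ)))
      atTop (𝓝 (ENNReal.ofReal c)) := by
    have := ENNReal.Tendsto.const_mul (a := ENNReal.ofReal c)
      (tendsto_ofReal_rpow_one_div hKpos) (Or.inl one_ne_zero)
    simpa using this
  refine le_of_tendsto_of_tendsto hlim
    (spectrum.pow_nnnorm_pow_one_div_tendsto_nhds_spectralRadius (B.map Complex.ofReal)) ?_
  filter_upwards [eventually_ge_atTop 1] with N hN
  have hN0 : (N : ℝ) ≠ 0 := by exact_mod_cast (Nat.one_le_iff_ne_zero.mp hN)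
  calc ENNReal.ofReal c * (ENNReal.ofReal K) ^ (1 / (N : ℝ))
      = (ENNReal.ofReal (c ^ N * K)) ^ (1 / (N : ℝ)) := by
        rw [ENNReal.ofReal_mul (pow_nonneg hc N), ENNReal.ofReal_pow hc,
          ENNReal.mul_rpow_of_nonneg _ _ (by positivity),
          ← ENNReal.rpow_natCast (ENNReal.ofReal c) N, ← ENNReal.rpow_mul,
          mul_one_div, div_self hN0, ENNReal.rpow_one]
    _ ≤ (‖(B.map Complex.ofReal) ^ N‖₊ : ℝ≥0∞) ^ (1 / (N : ℝ)) :=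
        ENNReal.rpow_le_rpow (hnorm N) (by positivity)

/-- Entry positivity of matrix powers along a path. -/
lemma pow_entry_pos_of_path {B : Matrix (Fin n) (Fin n) ℝ} (hB : ∀ i j, 0 ≤ B i j) :
    ∀ (k : ℕ) (p : Fin (k + 1) → Fin n),
      (∀ t : Fin k, 0 < B (p t.castSucc) (p t.succ)) →
      0 < (B ^ k) (p 0) (p (Fin.last k)) := by
  intro k
  induction k with
  | zero => intro p _; simp [Matrix.one_apply]
  | succ k ih =>
      intro p hp
      have h1 : 0 < (B ^ k) (p 0) (p (Fin.last k).castSucc) := by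
        have := ih (fun t => p t.castSucc) (fun t => by
          have := hp t.castSucc
          rwa [Fin.succ_castSucc] at this)
        simpa using this
      have h2 : 0 < B (p (Fin.last k).castSucc) (p (Fin.last (k + 1))) := by
        have := hp (Fin.last k)
        simpa [Fin.succ_last] using this
      rw [pow_succ, Matrix.mul_apply]
      refine Finset.sum_pos' (fun l _ => mul_nonneg (pow_entries_nonneg B hB k _ _) (hB _ _)) ?_
      exact ⟨(p (Fin.last k).castSucc), Finset.mem_univ _, mul_pos h1 h2⟩

/-- Wielandt-type lemma: a nonnegative, connective matrix with spectral radius at most 1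
fixes any nonzero nonnegative subinvariant vector, which is then strictly positive. -/
lemma wielandt_fixed [NeZero n] {B : Matrix (Fin n) (Fin n) ℝ}
    (hB : ∀ i j, 0 ≤ B i j)
    (hconn : ∀ i j, ∃ N : ℕ, 0 < (B ^ N) i j)
    (hsr : spectralRadius ℂ (B.map Complex.ofReal) ≤ 1)
    {w : Fin n → ℝ} (hw0 : ∀ i, 0 ≤ w i) (hwne : ∃ i, 0 < w i)
    (hsub : ∀ i, w i ≤ B.mulVec w i) :
    (∀ i, B.mulVec w i = w i) ∧ ∀ i, 0 < w i := by
  obtain ⟨js, hjs⟩ := hwne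
  choose N1 hN1 using fun i => hconn i js
  -- powers fix the subinvariance
  have hpow : ∀ (k : ℕ) (i : Fin n), w i ≤ (B ^ k).mulVec w i := by
    intro k
    induction k with
    | zero => intro i; simp [Matrix.one_mulVec]
    | succ k ih =>
        intro i
        have h1 : (B ^ (k + 1)).mulVec w = (B ^ k).mulVec (B.mulVec w) := by
          rw [pow_succ, ← Matrix.mulVec_mulVec]
        rw [h1]
        exact le_trans (ih i) (mulVec_le_mulVec (pow_entries_nonneg B hB k) hsub i)
  have hposof : ∀ (k : ℕ) (i : Fin n), 0 < (B ^ k) i js → 0 < (B ^ k).mulVec w i := by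
    intro k i hk
    calc (0:ℝ) < (B ^ k) i js * w js := mul_pos hk hjs
      _ ≤ (B ^ k).mulVec w i := single_le_mulVec (pow_entries_nonneg B hB k) hw0 i js
  have hmain : ∀ i, B.mulVec w i = w i := by
    by_contra hne
    push_neg at hne
    obtain ⟨i0, hi0⟩ := hne
    have hi0' : w i0 < B.mulVec w i0 := lt_of_le_of_ne (hsub i0) (Ne.symm hi0)
    set z : Fin n → ℝ := fun i => B.mulVec w i - w i with hz
    have hz0 : ∀ i, 0 ≤ z i := fun i => sub_nonneg.mpr (hsub i)
    have hzi0 : 0 < z i0 := sub_pos.mpr hi0'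
    choose N2 hN2 using fun i => hconn i i0
    set M : ℕ := (Finset.univ.sup N1) ⊔ (Finset.univ.sup N2) with hM
    set v : Fin n → ℝ := fun i => ∑ k ∈ Finset.range (M + 1), (B ^ k).mulVec w i with hv
    have hvpos : ∀ i, 0 < v i := by
      intro i
      rw [hv]
      refine Finset.sum_pos' (fun k _ => mulVec_nonneg (pow_entries_nonneg B hB k) hw0 i) ?_
      refine ⟨N1 i, Finset.mem_range.mpr ?_, hposof (N1 i) i (hN1 i)⟩
      exact Nat.lt_succ_of_le (le_trans (Finset.le_sup (Finset.mem_univ i)) le_sup_left)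
    -- B v = v + ∑ B^k z
    set u : Fin n → ℝ := fun i => ∑ k ∈ Finset.range (M + 1), (B ^ k).mulVec z i with hu
    have hstep : ∀ (k : ℕ) (i : Fin n),
        B.mulVec ((B ^ k).mulVec w) i = (B ^ k).mulVec w i + (B ^ k).mulVec z i := by
      intro k i
      have h1 : B.mulVec ((B ^ k).mulVec w) = (B ^ k).mulVec (B.mulVec w) := by
        rw [Matrix.mulVec_mulVec, Matrix.mulVec_mulVec, ← pow_succ, ← pow_succ']
      have h2 : B.mulVec w = fun j => w j + z j := by
        funext j; rw [hz]; ring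
      rw [h1, h2]
      simp only [mulVec_apply']
      rw [← Finset.sum_add_distrib]
      exact Finset.sum_congr rfl fun j _ => by ring
    have hBv : ∀ i, B.mulVec v i = v i + u i := by
      intro i
      have h1 : B.mulVec v i = ∑ k ∈ Finset.range (M + 1), B.mulVec ((B ^ k).mulVec w) i := by
        simp only [hv, mulVec_apply', Finset.mul_sum]
        rw [Finset.sum_comm]
      rw [h1, hv, hu, ← Finset.sum_add_distrib]
      exact Finset.sum_congr rfl fun k _ => hstep k i
    have hupos : ∀ i, 0 < u i := by
      intro i
      rw [hu]
      refine Finset.sum_pos' (fun k _ => mulVec_nonneg (pow_entries_nonneg B hB k) hz0 i) ?_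
      refine ⟨N2 i, Finset.mem_range.mpr
        (Nat.lt_succ_of_le (le_trans (Finset.le_sup (Finset.mem_univ i)) le_sup_right)), ?_⟩
      calc (0:ℝ) < (B ^ (N2 i)) i i0 * z i0 := mul_pos (hN2 i) hzi0
        _ ≤ (B ^ (N2 i)).mulVec z i := single_le_mulVec (pow_entries_nonneg B hB _) hz0 i i0
    -- extract growth constant
    have hne' : (Finset.univ : Finset (Fin n)).Nonempty := Finset.univ_nonempty
    set vmax : ℝ := Finset.univ.sup' hne' v with hvmax
    set umin : ℝ := Finset.univ.inf' hne' u with humin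
    have hvmax_pos : 0 < vmax := by
      obtain ⟨i⟩ := (inferInstance : Nonempty (Fin n))
      exact lt_of_lt_of_le (hvpos i) (Finset.le_sup' v (Finset.mem_univ i))
    have humin_pos : 0 < umin := by
      obtain ⟨i, _, hi⟩ := Finset.exists_mem_eq_inf' hne' u
      rw [humin, hi]; exact hupos i
    set c : ℝ := 1 + umin / vmax with hc
    have hc1 : 1 < c := by
      rw [hc]
      have : 0 < umin / vmax := div_pos humin_pos hvmax_pos
      linarith
    have hsup : ∀ i, c * v i ≤ B.mulVec v i := by
      intro i
      rw [hBv i, hc]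
      have h1 : v i * (umin / vmax) ≤ umin := by
        rw [div_eq_mul_inv, ← mul_assoc]
        calc v i * umin * vmax⁻¹ ≤ vmax * umin * vmax⁻¹ := by
              refine mul_le_mul_of_nonneg_right ?_ (inv_nonneg.mpr hvmax_pos.le)
              exact mul_le_mul_of_nonneg_right (Finset.le_sup' v (Finset.mem_univ i))
                humin_pos.le
          _ = umin := by field_simp
      have h2 : umin ≤ u i := Finset.inf'_le u (Finset.mem_univ i)
      nlinarith [hvpos i]
    have := le_specRad_of_superinvariant hB hvpos (by linarith : (0:ℝ) ≤ c) hsup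
    have hcle : ENNReal.ofReal c ≤ 1 := le_trans this hsr
    rw [ENNReal.ofReal_le_one] at hcle
    linarith
  refine ⟨hmain, fun i => ?_⟩
  have hfix : ∀ (k : ℕ) (i : Fin n), (B ^ k).mulVec w i = w i := by
    intro k
    induction k with
    | zero => intro i; simp [Matrix.one_mulVec]
    | succ k ih =>
        intro i
        have h1 : (B ^ (k + 1)).mulVec w = (B ^ k).mulVec (B.mulVec w) := by
          rw [pow_succ, ← Matrix.mulVec_mulVec]
        rw [h1]
        have : B.mulVec w = w := funext hmain
        rw [this]
        exact ih i
  have := hposof (N1 i) i (hN1 i)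
  rw [hfix (N1 i) i] at this
  exact this

/-- Existence of an eigenvalue of maximal modulus, with eigenvector. -/
lemma exists_max_eigenvector [NeZero n] (A : Matrix (Fin n) (Fin n) ℂ) :
    ∃ (μ : ℂ) (x : Fin n → ℂ), x ≠ 0 ∧ A.mulVec x = μ • x ∧
      (‖μ‖₊ : ℝ≥0∞) = spectralRadius ℂ A := by
  obtain ⟨μ, hmem, hrad⟩ := spectrum.exists_nnnorm_eq_spectralRadius A
  rw [spectrum.mem_iff] at hmem
  have hdet : (algebraMap ℂ (Matrix (Fin n) (Fin n) ℂ) μ - A).det = 0 := by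
    by_contra h
    exact hmem ((Matrix.isUnit_iff_isUnit_det _).mpr (isUnit_iff_ne_zero.mpr h))
  obtain ⟨x, hx0, hx⟩ := Matrix.exists_mulVec_eq_zero_iff.mpr hdet
  refine ⟨μ, x, hx0, ?_, hrad⟩
  have h1 : (algebraMap ℂ (Matrix (Fin n) (Fin n) ℂ) μ - A).mulVec x =
      μ • x - A.mulVec x := by
    rw [Matrix.sub_mulVec, Algebra.algebraMap_eq_smul_one, Matrix.smul_mulVec,
      Matrix.one_mulVec]
  rw [h1] at hx
  linear_combination (norm := module) -hx

lemma pow_mulVec_le_self {B : Matrix (Fin n) (Fin n) ℝ} (hB : ∀ i j, 0 ≤ B i j)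
    {w : Fin n → ℝ} (hsub : ∀ i, B.mulVec w i ≤ w i) :
    ∀ (N : ℕ) i, (B ^ N).mulVec w i ≤ w i := by
  intro N
  induction N with
  | zero => intro i; simp [Matrix.one_mulVec]
  | succ N ih =>
      intro i
      have h1 : (B ^ (N + 1)).mulVec w = (B ^ N).mulVec (B.mulVec w) := by
        rw [pow_succ, ← Matrix.mulVec_mulVec]
      rw [h1]
      exact le_trans (mulVec_le_mulVec (pow_entries_nonneg B hB N) hsub i) (ih i)

end MatrixAux

end AuxMatrix

section SeriesAux

/-- `n a^(n-1) (b-a) ≤ b^n - a^n` for `0 ≤ a ≤ b`. -/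
lemma pow_sub_pow_ge {a b : ℝ} (ha : 0 ≤ a) (hab : a ≤ b) :
    ∀ N : ℕ, (N : ℝ) * a ^ (N - 1) * (b - a) ≤ b ^ N - a ^ N := by
  intro N
  induction N with
  | zero => simp
  | succ N ih =>
      rcases Nat.eq_zero_or_pos N with hN | hN
      · subst hN; simp
      · have hb : 0 ≤ b := ha.trans hab
        have hpow : a ^ N ≤ b ^ N := pow_le_pow_left₀ ha hab N
        have haN : a * a ^ (N - 1) = a ^ N := by
          rw [← pow_succ']
          congr 1
          omega
        have key : b ^ (N + 1) - a ^ (N + 1) = b * (b ^ N - a ^ N) + (b - a) * a ^ N := by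
          ring
        have h1 : a * ((N : ℝ) * a ^ (N - 1) * (b - a)) ≤ b * (b ^ N - a ^ N) := by
          calc a * ((N : ℝ) * a ^ (N - 1) * (b - a)) ≤ a * (b ^ N - a ^ N) :=
                mul_le_mul_of_nonneg_left ih ha
            _ ≤ b * (b ^ N - a ^ N) :=
                mul_le_mul_of_nonneg_right hab (by linarith)
        have h2 : a * ((N : ℝ) * a ^ (N - 1) * (b - a)) = (N : ℝ) * a ^ N * (b - a) := by
          rw [← haN]; ring
        have hcast : ((N + 1 : ℕ) : ℝ) = (N : ℝ) + 1 := by push_cast; ring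
        have hsucc : ((N + 1 : ℕ) : ℝ) * a ^ (N + 1 - 1) * (b - a)
            = (N : ℝ) * a ^ N * (b - a) + a ^ N * (b - a) := by
          rw [hcast]
          simp only [Nat.add_sub_cancel]
          ring
        rw [hsucc, key]
        have h3 : a ^ N * (b - a) ≤ (b - a) * a ^ N := by ring_nf; exact le_rfl
        nlinarith [pow_nonneg ha N]

/-- Telescoping inequality for differences of monomials. -/
lemma sum_jac_le_prod_sub_prod {ι : Type*} [DecidableEq ι] (a b : ι → ℝ) (d : ι → ℕ)
    (ha : ∀ i, 0 ≤ a i) (hab : ∀ i, a i ≤ b i) (s : Finset ι) :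
    ∑ j ∈ s, (d j : ℝ) * (b j - a j) * (a j ^ (d j - 1) * ∏ k ∈ s.erase j, a k ^ d k)
      ≤ ∏ k ∈ s, b k ^ d k - ∏ k ∈ s, a k ^ d k := by
  induction s using Finset.induction_on with
  | empty => simp
  | @insert i s his ih =>
      have hPa : (0:ℝ) ≤ ∏ k ∈ s, a k ^ d k :=
        Finset.prod_nonneg fun k _ => pow_nonneg (ha k) _
      have hPab : ∏ k ∈ s, a k ^ d k ≤ ∏ k ∈ s, b k ^ d k :=
        Finset.prod_le_prod (fun k _ => pow_nonneg (ha k) _)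
          (fun k _ => pow_le_pow_left₀ (ha k) (hab k) _)
      rw [Finset.sum_insert his, Finset.prod_insert his, Finset.prod_insert his]
      have herase1 : (insert i s).erase i = s := Finset.erase_insert his
      have hterm1 : (d i : ℝ) * (b i - a i) * (a i ^ (d i - 1) *
          ∏ k ∈ (insert i s).erase i, a k ^ d k)
          = (d i : ℝ) * a i ^ (d i - 1) * (b i - a i) * ∏ k ∈ s, a k ^ d k := by
        rw [herase1]; ring
      have hterm2 : ∀ j ∈ s, (d j : ℝ) * (b j - a j) * (a j ^ (d j - 1) *
          ∏ k ∈ (insert i s).erase j, a k ^ d k)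
          = a i ^ d i * ((d j : ℝ) * (b j - a j) * (a j ^ (d j - 1) *
            ∏ k ∈ s.erase j, a k ^ d k)) := by
        intro j hj
        have hij : i ≠ j := fun h => his (h ▸ hj)
        have : (insert i s).erase j = insert i (s.erase j) :=
          Finset.erase_insert_of_ne hij
        rw [this, Finset.prod_insert (fun h => his (Finset.mem_of_mem_erase h))]
        ring
      rw [hterm1, Finset.sum_congr rfl hterm2, ← Finset.mul_sum]
      have hA : a i ^ d i * (∑ j ∈ s, (d j : ℝ) * (b j - a j) *
            (a j ^ (d j - 1) * ∏ k ∈ s.erase j, a k ^ d k))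
          ≤ a i ^ d i * (∏ k ∈ s, b k ^ d k - ∏ k ∈ s, a k ^ d k) :=
        mul_le_mul_of_nonneg_left ih (pow_nonneg (ha i) _)
      have hB : a i ^ d i * (∏ k ∈ s, b k ^ d k - ∏ k ∈ s, a k ^ d k)
          ≤ b i ^ d i * (∏ k ∈ s, b k ^ d k - ∏ k ∈ s, a k ^ d k) :=
        mul_le_mul_of_nonneg_right (pow_le_pow_left₀ (ha i) (hab i) _) (by linarith)
      have hC : (d i : ℝ) * a i ^ (d i - 1) * (b i - a i) * ∏ k ∈ s, a k ^ d k
          ≤ (b i ^ d i - a i ^ d i) * ∏ k ∈ s, a k ^ d k :=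
        mul_le_mul_of_nonneg_right (pow_sub_pow_ge (ha i) (hab i) (d i)) hPa
      nlinarith
/-- Specialised form used for the Jacobian subinvariance inequality. -/
lemma sum_jacShape_le {m : ℕ} (a b : Fin (m + 1) → ℝ) (d : Fin (m + 1) → ℕ)
    (ha : ∀ k, 0 ≤ a k) (hab : ∀ k, a k ≤ b k) :
    ∑ j : Fin m, (d j.succ : ℝ) *
        (∏ k, a k ^ (if k = j.succ then d k - 1 else d k)) * (b j.succ - a j.succ)
      ≤ ∏ k, b k ^ d k - ∏ k, a k ^ d k := by
  classical
  set F : Fin (m + 1) → ℝ := fun l => (d l : ℝ) * (b l - a l) *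
    (a l ^ (d l - 1) * ∏ k ∈ Finset.univ.erase l, a k ^ d k) with hF
  have hprod : ∀ j : Fin m, ∏ k, a k ^ (if k = j.succ then d k - 1 else d k)
      = a j.succ ^ (d j.succ - 1) * ∏ k ∈ Finset.univ.erase j.succ, a k ^ d k := by
    intro j
    rw [← Finset.mul_prod_erase Finset.univ _ (Finset.mem_univ j.succ)]
    congr 1
    · simp
    · exact Finset.prod_congr rfl fun k hk => by
        rw [if_neg (Finset.ne_of_mem_erase hk)]
  have hsum : ∑ j : Fin m, (d j.succ : ℝ) *
      (∏ k, a k ^ (if k = j.succ then d k - 1 else d k)) * (b j.succ - a j.succ)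
      = ∑ j : Fin m, F j.succ := by
    refine Finset.sum_congr rfl fun j _ => ?_
    rw [hprod j, hF]
    ring
  have hF0 : 0 ≤ F 0 := by
    rw [hF]
    refine mul_nonneg (mul_nonneg (Nat.cast_nonneg _) (by linarith [hab 0])) ?_
    exact mul_nonneg (pow_nonneg (ha 0) _)
      (Finset.prod_nonneg fun k _ => pow_nonneg (ha k) _)
  have hle : ∑ j : Fin m, F j.succ ≤ ∑ l : Fin (m + 1), F l := by
    rw [Fin.sum_univ_succ]
    linarith
  have hmain := sum_jac_le_prod_sub_prod a b d ha hab Finset.univ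
  have hmain' : ∑ l : Fin (m + 1), F l ≤ ∏ k, b k ^ d k - ∏ k, a k ^ d k := by
    refine le_trans (le_of_eq ?_) hmain
    exact Finset.sum_congr rfl fun l _ => by rw [hF]
  rw [hsum]
  linarith

end SeriesAux

section OneVar

variable {a : ℕ → ℝ} {ρ : ℝ}

lemma summable_of_le_rad (ha : ∀ n, 0 ≤ a n) (hs : Summable fun n => a n * ρ ^ n)
    {x : ℝ} (hx0 : 0 ≤ x) (hxρ : x ≤ ρ) : Summable fun n => a n * x ^ n := by
  refine Summable.of_nonneg_of_le (fun n => mul_nonneg (ha n) (pow_nonneg hx0 n))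
    (fun n => ?_) hs
  exact mul_le_mul_of_nonneg_left (pow_le_pow_left₀ hx0 hxρ n) (ha n)

lemma tsum_series_mono (ha : ∀ n, 0 ≤ a n) (hs : Summable fun n => a n * ρ ^ n)
    {x x' : ℝ} (hx0 : 0 ≤ x) (hxx' : x ≤ x') (hxρ : x' ≤ ρ) :
    ∑' n, a n * x ^ n ≤ ∑' n, a n * x' ^ n := by
  refine Summable.tsum_le_tsum (fun n => ?_) (summable_of_le_rad ha hs hx0 (hxx'.trans hxρ))
    (summable_of_le_rad ha hs (hx0.trans hxx') hxρ)
  exact mul_le_mul_of_nonneg_left (pow_le_pow_left₀ hx0 hxx' n) (ha n)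

lemma tsum_series_nonneg (ha : ∀ n, 0 ≤ a n) {x : ℝ} (hx0 : 0 ≤ x) :
    0 ≤ ∑' n, a n * x ^ n :=
  tsum_nonneg fun n => mul_nonneg (ha n) (pow_nonneg hx0 n)

lemma tsum_series_pos (ha : ∀ n, 0 ≤ a n) (hs : Summable fun n => a n * ρ ^ n)
    {x : ℝ} (hx0 : 0 < x) (hxρ : x ≤ ρ) {n0 : ℕ} (hn0 : a n0 ≠ 0) :
    0 < ∑' n, a n * x ^ n := by
  have h1 : a n0 * x ^ n0 ≤ ∑' n, a n * x ^ n :=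
    Summable.le_tsum (summable_of_le_rad ha hs hx0.le hxρ) n0
      (fun n _ => mul_nonneg (ha n) (pow_nonneg hx0.le n))
  have h2 : 0 < a n0 * x ^ n0 :=
    mul_pos (lt_of_le_of_ne (ha n0) (Ne.symm hn0)) (pow_pos hx0 n0)
  linarith

lemma tsum_series_sub_pos (ha : ∀ n, 0 ≤ a n) (hs : Summable fun n => a n * ρ ^ n)
    {x x' : ℝ} (hx0 : 0 ≤ x) (hxx' : x < x') (hxρ : x' ≤ ρ)
    {n0 : ℕ} (hn0 : a n0 ≠ 0) (hn1 : 1 ≤ n0) :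
    0 < ∑' n, a n * x' ^ n - ∑' n, a n * x ^ n := by
  have hsx := summable_of_le_rad ha hs hx0 (hxx'.le.trans hxρ)
  have hsx' := summable_of_le_rad ha hs (hx0.trans hxx'.le) hxρ
  have hdiff : ∑' n, a n * x' ^ n - ∑' n, a n * x ^ n
      = ∑' n, (a n * x' ^ n - a n * x ^ n) := (Summable.tsum_sub hsx' hsx).symm
  rw [hdiff]
  have hterm : ∀ n, 0 ≤ a n * x' ^ n - a n * x ^ n := fun n => by
    have := mul_le_mul_of_nonneg_left (pow_le_pow_left₀ hx0 hxx'.le n) (ha n)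
    linarith
  have h1 : a n0 * x' ^ n0 - a n0 * x ^ n0 ≤ ∑' n, (a n * x' ^ n - a n * x ^ n) :=
    Summable.le_tsum (hsx'.sub hsx) n0 (fun n _ => hterm n)
  have h2 : 0 < a n0 * x' ^ n0 - a n0 * x ^ n0 := by
    have hpow : x ^ n0 < x' ^ n0 :=
      pow_lt_pow_left₀ hxx' hx0 (by omega)
    have : 0 < a n0 := lt_of_le_of_ne (ha n0) (Ne.symm hn0)
    nlinarith
  linarith

lemma tsum_series_tendsto (ha : ∀ n, 0 ≤ a n) (hs : Summable fun n => a n * ρ ^ n)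
    {xk : ℕ → ℝ} (hxk : ∀ k, 0 ≤ xk k ∧ xk k ≤ ρ) (hxt : Tendsto xk atTop (𝓝 ρ)) :
    Tendsto (fun k => ∑' n, a n * xk k ^ n) atTop (𝓝 (∑' n, a n * ρ ^ n)) := by
  refine tendsto_tsum_of_dominated_convergence hs (fun n => ?_) ?_
  · exact ((hxt.pow n).const_mul (a n))
  · refine Eventually.of_forall fun k => fun n => ?_
    rw [Real.norm_eq_abs, abs_of_nonneg (mul_nonneg (ha n) (pow_nonneg (hxk k).1 n))]
    exact mul_le_mul_of_nonneg_left (pow_le_pow_left₀ (hxk k).1 (hxk k).2 n) (ha n)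

/-- If all coefficients of index `≥ 1` vanish, the radius is infinite. -/
lemma radius_eq_top_of_eventually_zero (h : ∀ n, 1 ≤ n → a n = 0) :
    (⨆ (r : ℝ≥0) (_ : Summable fun n => |a n| * (r : ℝ) ^ n), (r : ℝ≥0∞)) = ⊤ := by
  refine ENNReal.eq_top_of_forall_nnreal_le fun r => ?_
  refine le_iSup₂ (f := fun (r : ℝ≥0) (_ : Summable fun n => |a n| * (r : ℝ) ^ n) =>
    (r : ℝ≥0∞)) r ?_
  refine (summable_of_ne_finset_zero (s := {0}) fun n hn => ?_)
  have : a n = 0 := h n (Nat.one_le_iff_ne_zero.mpr (by simpa using hn))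
  simp [this]

end OneVar

section SystemAux

variable {S : PosSystem m}

lemma jac_apply (S : PosSystem m) (x : Fin (m + 1) → ℝ) (i j : Fin m) :
    jac S x i j = ∑' d, jacTerm S i j x d := rfl

lemma jacC_apply (S : PosSystem m) (x : Fin (m + 1) → ℂ) (i j : Fin m) :
    jacC S x i j = ∑' d, jacTermC S i j x d := rfl

lemma term_nonneg (S : PosSystem m) (i : Fin m) {x : Fin (m + 1) → ℝ}
    (hx : ∀ k, 0 ≤ x k) (d : Fin (m + 1) → ℕ) : 0 ≤ term S i x d :=
  mul_nonneg (S.nonneg i d) (Finset.prod_nonneg fun k _ => pow_nonneg (hx k) _)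

lemma jacTerm_nonneg (S : PosSystem m) (i j : Fin m) {x : Fin (m + 1) → ℝ}
    (hx : ∀ k, 0 ≤ x k) (d : Fin (m + 1) → ℕ) : 0 ≤ jacTerm S i j x d :=
  mul_nonneg (mul_nonneg (S.nonneg i d) (Nat.cast_nonneg _))
    (Finset.prod_nonneg fun k _ => pow_nonneg (hx k) _)

lemma term_mono (S : PosSystem m) (i : Fin m) {x x' : Fin (m + 1) → ℝ}
    (hx : ∀ k, 0 ≤ x k) (hxx : ∀ k, x k ≤ x' k) (d : Fin (m + 1) → ℕ) :
    term S i x d ≤ term S i x' d := by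
  refine mul_le_mul_of_nonneg_left ?_ (S.nonneg i d)
  exact Finset.prod_le_prod (fun k _ => pow_nonneg (hx k) _)
    (fun k _ => pow_le_pow_left₀ (hx k) (hxx k) _)

lemma jacTerm_mono (S : PosSystem m) (i j : Fin m) {x x' : Fin (m + 1) → ℝ}
    (hx : ∀ k, 0 ≤ x k) (hxx : ∀ k, x k ≤ x' k) (d : Fin (m + 1) → ℕ) :
    jacTerm S i j x d ≤ jacTerm S i j x' d := by
  refine mul_le_mul_of_nonneg_left ?_
    (mul_nonneg (S.nonneg i d) (Nat.cast_nonneg _))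
  exact Finset.prod_le_prod (fun k _ => pow_nonneg (hx k) _)
    (fun k _ => pow_le_pow_left₀ (hx k) (hxx k) _)

lemma jac_nonneg (S : PosSystem m) {x : Fin (m + 1) → ℝ} (hx : ∀ k, 0 ≤ x k) (i j : Fin m) :
    0 ≤ jac S x i j :=
  tsum_nonneg fun d => jacTerm_nonneg S i j hx d

lemma summable_term_of_le (S : PosSystem m) {x x' : Fin (m + 1) → ℝ}
    (hx : ∀ k, 0 ≤ x k) (hxx : ∀ k, x k ≤ x' k)
    (hs : ∀ i, Summable fun d => term S i x' d) (i : Fin m) :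
    Summable fun d => term S i x d :=
  Summable.of_nonneg_of_le (fun d => term_nonneg S i hx d)
    (fun d => term_mono S i hx hxx d) (hs i)

lemma summable_jacTerm_of_le (S : PosSystem m) {x x' : Fin (m + 1) → ℝ}
    (hx : ∀ k, 0 ≤ x k) (hxx : ∀ k, x k ≤ x' k)
    (hs : ∀ i j, Summable fun d => jacTerm S i j x' d) (i j : Fin m) :
    Summable fun d => jacTerm S i j x d :=
  Summable.of_nonneg_of_le (fun d => jacTerm_nonneg S i j hx d)
    (fun d => jacTerm_mono S i j hx hxx d) (hs i j)

/-- Positivity of a Jacobian entry at a strictly positive point, given that the partial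
derivative is not identically zero. -/
lemma jac_pos_of_dependsOn {i j : Fin m} (hd : DependsOn S i j)
    {x : Fin (m + 1) → ℝ} (hx : ∀ k, 0 < x k)
    (hs : Summable fun d => jacTerm S i j x d) : 0 < jac S x i j := by
  obtain ⟨x', _, _, hne⟩ := hd
  have hex : ∃ d, jacTerm S i j x' d ≠ 0 := by
    by_contra h
    push_neg at h
    exact hne (by rw [jac_apply]; exact (tsum_congr h).trans tsum_zero)
  obtain ⟨d, hd0⟩ := hex
  have hc : S.c i d ≠ 0 ∧ ((d j.succ : ℝ)) ≠ 0 := by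
    constructor
    · intro h; exact hd0 (by simp [jacTerm, h])
    · intro h; exact hd0 (by simp [jacTerm, h])
  have hpos : 0 < jacTerm S i j x d := by
    refine mul_pos (mul_pos ?_ ?_) ?_
    · exact lt_of_le_of_ne (S.nonneg i d) (Ne.symm hc.1)
    · exact lt_of_le_of_ne (Nat.cast_nonneg _) (Ne.symm hc.2)
    · exact Finset.prod_pos fun k _ => pow_pos (hx k) _
  have := Summable.le_tsum hs d (fun d' _ => jacTerm_nonneg S i j (fun k => (hx k).le) d')
  rw [jac_apply]
  linarith

/-- The key subinvariance inequality `J(a)·(b - a) ≤ H(b) - H(a)` for `a ≤ b`. -/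
lemma jac_mulVec_le (S : PosSystem m) {a b : Fin (m + 1) → ℝ}
    (ha : ∀ k, 0 ≤ a k) (hab : ∀ k, a k ≤ b k)
    (hsb : ∀ i, Summable fun d => term S i b d)
    (hja : ∀ i j, Summable fun d => jacTerm S i j a d) (i : Fin m) :
    (jac S a).mulVec (fun j => b j.succ - a j.succ) i ≤ Hval S b i - Hval S a i := by
  have hsa : ∀ i, Summable fun d => term S i a d := summable_term_of_le S ha hab hsb
  set w : Fin m → ℝ := fun j => b j.succ - a j.succ with hw
  have hrhs : Hval S b i - Hval S a i = ∑' d, (term S i b d - term S i a d) := by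
    rw [Hval, Hval, ← Summable.tsum_sub (hsb i) (hsa i)]
  have hlhs : (jac S a).mulVec w i = ∑' d, ∑ j, jacTerm S i j a d * w j := by
    rw [mulVec_apply']
    have h1 : ∀ j, jac S a i j * w j = ∑' d, jacTerm S i j a d * w j := by
      intro j
      rw [jac_apply, tsum_mul_right]
    rw [Finset.sum_congr rfl fun j _ => h1 j]
    exact (Summable.tsum_finsetSum fun j _ => (hja i j).mul_right (w j)).symm
  rw [hrhs, hlhs]
  refine Summable.tsum_le_tsum (fun d => ?_) ?_ ((hsb i).sub (hsa i))
  · have hkey := sum_jacShape_le a b d ha hab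
    have hexp : ∑ j, jacTerm S i j a d * w j
        = S.c i d * ∑ j : Fin m, (d j.succ : ℝ) *
          (∏ k, a k ^ (if k = j.succ then d k - 1 else d k)) * (b j.succ - a j.succ) := by
      rw [Finset.mul_sum]
      refine Finset.sum_congr rfl fun j _ => ?_
      rw [jacTerm, hw]
      ring
    have hterm : term S i b d - term S i a d
        = S.c i d * (∏ k, b k ^ d k - ∏ k, a k ^ d k) := by
      rw [term, term, mul_sub]
    rw [hexp, hterm]
    exact mul_le_mul_of_nonneg_left hkey (S.nonneg i d)
  · exact summable_sum fun j _ => ((hja i j).mul_right (w j))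

/-- Norm bound for complex Jacobian entries. -/
lemma jacC_norm_le (S : PosSystem m) {aC : Fin (m + 1) → ℂ} {bR : Fin (m + 1) → ℝ}
    (hb : ∀ l, ‖aC l‖ ≤ bR l) (hs : ∀ i j, Summable fun d => jacTerm S i j bR d)
    (i j : Fin m) : ‖jacC S aC i j‖ ≤ jac S bR i j := by
  have hbnn : ∀ l, 0 ≤ bR l := fun l => (norm_nonneg _).trans (hb l)
  have hterm : ∀ d, ‖jacTermC S i j aC d‖ ≤ jacTerm S i j bR d := by
    intro d
    rw [jacTermC, jacTerm]
    rw [norm_mul, norm_mul]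
    have h1 : ‖(S.c i d : ℂ)‖ = S.c i d := by
      rw [Complex.norm_real, Real.norm_eq_abs, abs_of_nonneg (S.nonneg i d)]
    have h2 : ‖((d j.succ : ℕ) : ℂ)‖ = (d j.succ : ℝ) := by
      rw [Complex.norm_natCast]
    rw [h1, h2, norm_prod]
    refine mul_le_mul_of_nonneg_left ?_
      (mul_nonneg (S.nonneg i d) (Nat.cast_nonneg _))
    refine Finset.prod_le_prod (fun k _ => norm_nonneg _) (fun k _ => ?_)
    rw [norm_pow]
    exact pow_le_pow_left₀ (norm_nonneg _) (hb k) _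
  have hsumC : Summable fun d => ‖jacTermC S i j aC d‖ :=
    Summable.of_nonneg_of_le (fun d => norm_nonneg _) hterm (hs i j)
  calc ‖jacC S aC i j‖ ≤ ∑' d, ‖jacTermC S i j aC d‖ := by
        rw [jacC_apply]; exact norm_tsum_le_tsum_norm hsumC
    _ ≤ ∑' d, jacTerm S i j bR d := Summable.tsum_le_tsum hterm hsumC (hs i j)
    _ = jac S bR i j := (jac_apply S bR i j).symm

/-- Entrywise convergence of the Jacobian along a sequence of points increasing to `b`. -/
lemma jac_tendsto (S : PosSystem m) {pk : ℕ → Fin (m + 1) → ℝ} {b : Fin (m + 1) → ℝ}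
    (h0 : ∀ k l, 0 ≤ pk k l) (hle : ∀ k l, pk k l ≤ b l)
    (hs : ∀ i j, Summable fun d => jacTerm S i j b d)
    (ht : ∀ l, Tendsto (fun k => pk k l) atTop (𝓝 (b l))) (i j : Fin m) :
    Tendsto (fun k => jac S (pk k) i j) atTop (𝓝 (jac S b i j)) := by
  simp only [jac_apply]
  refine tendsto_tsum_of_dominated_convergence (hs i j) (fun d => ?_) ?_
  · -- pointwise convergence of each term
    rw [jacTerm]
    refine Tendsto.const_mul _ ?_
    exact tendsto_finset_prod _ fun l _ => (ht l).pow _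
  · refine Eventually.of_forall fun k d => ?_
    rw [Real.norm_eq_abs, abs_of_nonneg (jacTerm_nonneg S i j (h0 k) d)]
    exact jacTerm_mono S i j (h0 k) (hle k) d

end SystemAux

/-- At a dominant singularity `α`, `Λ_H(α,Y(α)) ≤ Λ_H(ρ,Y(ρ)) ≤ 1`,
and equality to `1` forces the Jacobian entries at `α` to have the same moduli as at `ρ`. -/
theorem statement16 (m : ℕ) (hm : 1 ≤ m) (S : PosSystem m) (sol : GFSol S)
    (hirr : sol.Irreducible) (hfin : sol.rad ≠ ⊤)
    (ρr : ℝ) (hρr : ρr = sol.rad.toReal)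
    (hconvρ : ∀ i, Summable fun n => |sol.y i n| * ρr ^ n)
    (hJρ : JacConvAt S (vec ρr (eval sol.y ρr)))
    (α : ℂ) (hα : ‖α‖ = ρr)
    (hsing : IsSingularity sol ρr α) :
    spectralRadius ℂ (jacC S (Fin.cons α (evalC sol.y α))) ≤
        lambda S (vec ρr (eval sol.y ρr)) ∧
      lambda S (vec ρr (eval sol.y ρr)) ≤ 1 ∧
      (spectralRadius ℂ (jacC S (Fin.cons α (evalC sol.y α))) = 1 →
        ∀ i j, ‖jacC S (Fin.cons α (evalC sol.y α)) i j‖ =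
          jac S (vec ρr (eval sol.y ρr)) i j) := by
  classical
  haveI : NeZero m := ⟨by omega⟩
  obtain ⟨hwf, hzf, hSC⟩ := hirr
  have hy0 : ∀ i n, 0 ≤ sol.y i n := sol.nonneg
  have hraddef : sol.rad = ⨅ i, radius (sol.y i) := rfl
  have hrad0 : 0 < sol.rad := sol.rad_pos
  have hρpos : 0 < ρr := by rw [hρr]; exact ENNReal.toReal_pos hrad0.ne' hfin
  have hradeq : sol.rad = ENNReal.ofReal ρr := by rw [hρr, ENNReal.ofReal_toReal hfin]
  have hlt_rad : ∀ x : ℝ, x < ρr → ENNReal.ofReal x < ⨅ i, radius (sol.y i) := by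
    intro x hx
    rw [← hraddef, hradeq]
    exact (ENNReal.ofReal_lt_ofReal_iff hρpos).mpr hx
  have hconv' : ∀ i, Summable fun n => sol.y i n * ρr ^ n := fun i =>
    (summable_congr fun n => by rw [abs_of_nonneg (hy0 i n)]).mp (hconvρ i)
  -- the approximating sequence
  set xk : ℕ → ℝ := fun k => ρr - ρr / (k + 2) with hxk
  have hxkpos : ∀ k, 0 < xk k := by
    intro k
    have hk0 : (0:ℝ) ≤ (k:ℝ) := Nat.cast_nonneg k
    have h2 : (1:ℝ) < (k:ℝ) + 2 := by linarith
    have := div_lt_self hρpos h2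
    simp only [hxk]
    linarith
  have hxklt : ∀ k, xk k < ρr := by
    intro k
    have hk0 : (0:ℝ) ≤ (k:ℝ) := Nat.cast_nonneg k
    have : 0 < ρr / ((k:ℝ)+2) := by positivity
    simp only [hxk]
    linarith
  have hxkmono : ∀ k, xk k < xk (k+1) := by
    intro k
    have hk0 : (0:ℝ) ≤ (k:ℝ) := Nat.cast_nonneg k
    have h1 : ρr / ((k:ℝ)+1+2) < ρr / ((k:ℝ)+2) :=
      div_lt_div_of_pos_left hρpos (by linarith) (by linarith)
    simp only [hxk]
    push_cast
    linarith
  have hxt : Tendsto xk atTop (𝓝 ρr) := by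
    have h1 : Tendsto (fun k : ℕ => ((k:ℝ) + 2)) atTop atTop :=
      tendsto_atTop_add_const_right _ 2 tendsto_natCast_atTop_atTop
    have h2 : Tendsto (fun k : ℕ => ρr / ((k:ℝ) + 2)) atTop (𝓝 0) :=
      Tendsto.div_atTop tendsto_const_nhds h1
    have h3 := (tendsto_const_nhds (x := ρr) (f := (atTop : Filter ℕ))).sub h2
    simpa [hxk] using h3
  -- basic facts about the solution series
  have hYsum : ∀ {x : ℝ}, 0 ≤ x → x ≤ ρr → ∀ i, Summable fun n => sol.y i n * x ^ n :=
    fun hx0 hxρ i => summable_of_le_rad (hy0 i) (hconv' i) hx0 hxρ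
  have hYnn : ∀ {x : ℝ}, 0 ≤ x → ∀ i, 0 ≤ eval sol.y x i :=
    fun hx0 i => tsum_series_nonneg (hy0 i) hx0
  have hYmono : ∀ {x x' : ℝ}, 0 ≤ x → x ≤ x' → x' ≤ ρr → ∀ i,
      eval sol.y x i ≤ eval sol.y x' i :=
    fun hx0 hxx hxρ i => tsum_series_mono (hy0 i) (hconv' i) hx0 hxx hxρ
  have hYpos : ∀ {x : ℝ}, 0 < x → x ≤ ρr → ∀ i, 0 < eval sol.y x i := by
    intro x hx0 hxρ i
    obtain ⟨n0, hn0⟩ := hzf i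
    exact tsum_series_pos (hy0 i) (hconv' i) hx0 hxρ hn0
  have hYtend : ∀ i, Tendsto (fun k => eval sol.y (xk k) i) atTop (𝓝 (eval sol.y ρr i)) :=
    fun i => tsum_series_tendsto (hy0 i) (hconv' i)
      (fun k => ⟨(hxkpos k).le, (hxklt k).le⟩) hxt
  -- the evaluation points
  have hPnn : ∀ {x : ℝ}, 0 ≤ x → ∀ l, 0 ≤ vec x (eval sol.y x) l := by
    intro x hx0 l
    refine Fin.cases ?_ ?_ l
    · simpa [vec] using hx0
    · intro j; simpa [vec] using hYnn hx0 j
  have hPle : ∀ {x x' : ℝ}, 0 ≤ x → x ≤ x' → x' ≤ ρr → ∀ l,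
      vec x (eval sol.y x) l ≤ vec x' (eval sol.y x') l := by
    intro x x' hx0 hxx hxρ l
    refine Fin.cases ?_ ?_ l
    · simpa [vec] using hxx
    · intro j; simpa [vec] using hYmono hx0 hxx hxρ j
  have hPpos : ∀ {x : ℝ}, 0 < x → x ≤ ρr → ∀ l, 0 < vec x (eval sol.y x) l := by
    intro x hx0 hxρ l
    refine Fin.cases ?_ ?_ l
    · simpa [vec] using hx0
    · intro j; simpa [vec] using hYpos hx0 hxρ j
  -- summability of Jacobian entries
  have hjsumρ : ∀ i j, Summable fun d => jacTerm S i j (vec ρr (eval sol.y ρr)) d := by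
    intro i j
    refine (summable_congr fun d => ?_).mp (hJρ i j)
    exact abs_of_nonneg (jacTerm_nonneg S i j (hPnn hρpos.le) d)
  have hjsum : ∀ {x : ℝ}, 0 ≤ x → x ≤ ρr → ∀ i j,
      Summable fun d => jacTerm S i j (vec x (eval sol.y x)) d :=
    fun hx0 hxρ i j => summable_jacTerm_of_le S (hPnn hx0) (hPle hx0 hxρ le_rfl) hjsumρ i j
  -- the limit matrix
  set B : Matrix (Fin m) (Fin m) ℝ := jac S (vec ρr (eval sol.y ρr)) with hB
  have hBnn : ∀ i j, 0 ≤ B i j := fun i j => jac_nonneg S (hPnn hρpos.le) i j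
  have hJknn : ∀ k i j, 0 ≤ jac S (vec (xk k) (eval sol.y (xk k))) i j :=
    fun k i j => jac_nonneg S (hPnn (hxkpos k).le) i j
  have hJtend : ∀ i j, Tendsto (fun k => jac S (vec (xk k) (eval sol.y (xk k))) i j)
      atTop (𝓝 (B i j)) := by
    intro i j
    refine jac_tendsto S (fun k l => hPnn (hxkpos k).le l)
      (fun k l => hPle (hxkpos k).le (hxklt k).le le_rfl l) hjsumρ ?_ i j
    intro l
    refine Fin.cases ?_ ?_ l
    · simpa [vec] using hxt
    · intro j'; simpa [vec] using hYtend j'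
  -- the strictly positive subinvariant vectors
  set wv : ℕ → Fin m → ℝ := fun k j => eval sol.y (xk (k+1)) j - eval sol.y (xk k) j with hwv
  have hwvnn : ∀ k j, 0 ≤ wv k j := by
    intro k j
    have := hYmono (hxkpos k).le (hxkmono k).le (hxklt (k+1)).le j
    simp only [hwv]
    linarith
  have hsubk : ∀ k i, (jac S (vec (xk k) (eval sol.y (xk k)))).mulVec (wv k) i ≤ wv k i := by
    intro k i
    have hfx : eval sol.y (xk k) = Hval S (vec (xk k) (eval sol.y (xk k))) :=
      sol.fixed (xk k) (hxkpos k).le (hlt_rad _ (hxklt k))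
    have hfx' : eval sol.y (xk (k+1)) = Hval S (vec (xk (k+1)) (eval sol.y (xk (k+1)))) :=
      sol.fixed (xk (k+1)) (hxkpos (k+1)).le (hlt_rad _ (hxklt (k+1)))
    have hsb : ∀ i', Summable fun d => term S i' (vec (xk (k+1)) (eval sol.y (xk (k+1)))) d := by
      intro i'
      have hcv := sol.conv (xk (k+1)) (hxkpos (k+1)).le (hlt_rad _ (hxklt (k+1)))
      refine (summable_congr fun d => ?_).mp (hcv i')
      exact abs_of_nonneg (term_nonneg S i' (hPnn (hxkpos (k+1)).le) d)
    have hkey := jac_mulVec_le S (hPnn (hxkpos k).le)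
      (hPle (hxkpos k).le (hxkmono k).le (hxklt (k+1)).le) hsb
      (hjsum (hxkpos k).le (hxklt k).le) i
    have hveq : (fun j : Fin m => vec (xk (k+1)) (eval sol.y (xk (k+1))) j.succ -
        vec (xk k) (eval sol.y (xk k)) j.succ) = wv k := by
      funext j
      simp [vec, hwv]
    rw [hveq] at hkey
    refine hkey.trans ?_
    have h1 : Hval S (vec (xk (k+1)) (eval sol.y (xk (k+1)))) i = eval sol.y (xk (k+1)) i :=
      (congrFun hfx' i).symm
    have h2 : Hval S (vec (xk k) (eval sol.y (xk k))) i = eval sol.y (xk k) i :=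
      (congrFun hfx i).symm
    rw [h1, h2]
  -- a coordinate with a nonconstant series
  obtain ⟨j0, n0, hn0ne, hn0ge⟩ : ∃ j0 n0, sol.y j0 n0 ≠ 0 ∧ 1 ≤ n0 := by
    obtain ⟨j0, hj0⟩ : ∃ j0, radius (sol.y j0) ≠ ⊤ := by
      by_contra h
      push_neg at h
      exact hfin (by rw [hraddef]; exact iInf_eq_top.mpr h)
    by_contra h
    push_neg at h
    refine hj0 (radius_eq_top_of_eventually_zero fun n hn => ?_)
    by_contra hne
    exact absurd hn (by simpa using (h j0 n hne))
  have hwvj0 : ∀ k, 0 < wv k j0 := fun k =>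
    tsum_series_sub_pos (hy0 j0) (hconv' j0) (hxkpos k).le (hxkmono k) (hxklt (k+1)).le
      hn0ne hn0ge
  have hwvpos : ∀ k i, 0 < wv k i := by
    intro k i
    obtain ⟨q, hq1, p, hp0, hplast, hpdep⟩ := hSC i j0
    have hpe : ∀ t : Fin q, 0 < (jac S (vec (xk k) (eval sol.y (xk k)))) (p t.castSucc)
        (p t.succ) := fun t =>
      jac_pos_of_dependsOn (hpdep t) (hPpos (hxkpos k) (hxklt k).le)
        (hjsum (hxkpos k).le (hxklt k).le _ _)
    have hpow := pow_entry_pos_of_path (hJknn k) q p hpe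
    rw [hp0, hplast] at hpow
    have h1 : ((jac S (vec (xk k) (eval sol.y (xk k)))) ^ q).mulVec (wv k) i ≤ wv k i :=
      pow_mulVec_le_self (hJknn k) (hsubk k) q i
    have h2 := single_le_mulVec (pow_entries_nonneg _ (hJknn k) q) (hwvnn k) i j0
    have h3 : 0 < ((jac S (vec (xk k) (eval sol.y (xk k)))) ^ q) i j0 * wv k j0 :=
      mul_pos hpow (hwvj0 k)
    linarith
  -- Part 2 : Λ(ρ) ≤ 1
  have part2 : lambda S (vec ρr (eval sol.y ρr)) ≤ 1 := by
    show spectralRadius ℂ (B.map Complex.ofReal) ≤ 1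
    by_contra hgt
    push_neg at hgt
    obtain ⟨r, hr1, hrlt⟩ := ENNReal.lt_iff_exists_nnreal_btwn.mp hgt
    have hr1' : (1:ℝ) < (r:ℝ) := by exact_mod_cast hr1
    have hev : ∀ᶠ k in atTop, ∀ i j, B i j ≤ (r:ℝ) * jac S (vec (xk k) (eval sol.y (xk k))) i j := by
      rw [eventually_all]
      intro i
      rw [eventually_all]
      intro j
      rcases eq_or_lt_of_le (hBnn i j) with hB0 | hBpos
      · refine Eventually.of_forall fun k => ?_
        rw [← hB0]
        exact mul_nonneg (by positivity) (hJknn k i j)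
      · have hlt : B i j / (r:ℝ) < B i j := div_lt_self hBpos hr1'
        have := (hJtend i j).eventually (eventually_gt_nhds hlt)
        filter_upwards [this] with k hk
        rw [div_lt_iff₀ (by linarith : (0:ℝ) < (r:ℝ))] at hk
        linarith [hk]
    obtain ⟨k, hk⟩ := hev.exists
    have hsubB : ∀ i, B.mulVec (wv k) i ≤ (r:ℝ) * wv k i := by
      intro i
      have h1 : B.mulVec (wv k) i ≤
          ∑ j, ((r:ℝ) * jac S (vec (xk k) (eval sol.y (xk k))) i j) * wv k j := by
        rw [mulVec_apply']
        exact Finset.sum_le_sum fun j _ =>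
          mul_le_mul_of_nonneg_right (hk i j) (hwvnn k j)
      have h2 : ∑ j, ((r:ℝ) * jac S (vec (xk k) (eval sol.y (xk k))) i j) * wv k j
          = (r:ℝ) * (jac S (vec (xk k) (eval sol.y (xk k)))).mulVec (wv k) i := by
        rw [mulVec_apply', Finset.mul_sum]
        exact Finset.sum_congr rfl fun j _ => by ring
      have h3 := hsubk k i
      calc B.mulVec (wv k) i ≤ (r:ℝ) * (jac S (vec (xk k) (eval sol.y (xk k)))).mulVec (wv k) i :=
            by rw [← h2]; exact h1
        _ ≤ (r:ℝ) * wv k i := mul_le_mul_of_nonneg_left h3 (by linarith)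
    have := specRad_le_of_subinvariant hBnn (hwvpos k) (by linarith : (0:ℝ) ≤ (r:ℝ)) hsubB
    rw [ENNReal.ofReal_coe_nnreal] at this
    exact absurd (lt_of_le_of_lt this hrlt) (lt_irrefl _)
  -- Part 1 : Λ(α) ≤ Λ(ρ)
  have hnormC : ∀ l, ‖(Fin.cons α (evalC sol.y α) : Fin (m + 1) → ℂ) l‖ ≤
      vec ρr (eval sol.y ρr) l := by
    intro l
    refine Fin.cases ?_ ?_ l
    · show ‖α‖ ≤ vec ρr (eval sol.y ρr) 0
      rw [show vec ρr (eval sol.y ρr) 0 = ρr from rfl, ← hα]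
    · intro j
      simp only [Fin.cons_succ]
      have hnrm : ∀ n : ℕ, ‖((sol.y j n : ℝ) : ℂ) * α ^ n‖ = sol.y j n * ρr ^ n := by
        intro n
        rw [norm_mul, norm_pow, Complex.norm_real, Real.norm_eq_abs,
          abs_of_nonneg (hy0 j n), hα]
      have hsn : Summable fun n => ‖((sol.y j n : ℝ) : ℂ) * α ^ n‖ :=
        (summable_congr fun n => (hnrm n)).mpr (hconv' j)
      calc ‖evalC sol.y α j‖ ≤ ∑' n, ‖((sol.y j n : ℝ) : ℂ) * α ^ n‖ :=
            norm_tsum_le_tsum_norm hsn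
        _ = ∑' n, sol.y j n * ρr ^ n := tsum_congr hnrm
        _ = vec ρr (eval sol.y ρr) j.succ := by simp [vec, eval]
  have hAB : ∀ i j, ‖jacC S (Fin.cons α (evalC sol.y α)) i j‖ ≤ B i j :=
    fun i j => jacC_norm_le S hnormC hjsumρ i j
  have part1 : spectralRadius ℂ (jacC S (Fin.cons α (evalC sol.y α))) ≤
      lambda S (vec ρr (eval sol.y ρr)) :=
    specRad_le_specRad_of_entries hAB
  refine ⟨part1, part2, ?_⟩
  -- Part 3 : equality case
  intro hone i j
  set A : Matrix (Fin m) (Fin m) ℂ := jacC S (Fin.cons α (evalC sol.y α)) with hA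
  have hconnB : ∀ i' j' : Fin m, ∃ N : ℕ, 0 < (B ^ N) i' j' := by
    intro i' j'
    obtain ⟨q, hq1, p, hp0, hplast, hpdep⟩ := hSC i' j'
    have hpe : ∀ t : Fin q, 0 < B (p t.castSucc) (p t.succ) := fun t =>
      jac_pos_of_dependsOn (hpdep t) (hPpos hρpos le_rfl) (hjsumρ _ _)
    have hpow := pow_entry_pos_of_path hBnn q p hpe
    rw [hp0, hplast] at hpow
    exact ⟨q, hpow⟩
  obtain ⟨μ, xv, hxv0, heig, hμrad⟩ := exists_max_eigenvector A
  have hμ1 : ‖μ‖ = 1 := by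
    rw [hone] at hμrad
    have h2 : ‖μ‖₊ = 1 := by exact_mod_cast hμrad
    rw [← coe_nnnorm, h2, NNReal.coe_one]
  set w : Fin m → ℝ := fun i' => ‖xv i'‖ with hwdef
  have hw0 : ∀ i', 0 ≤ w i' := fun i' => norm_nonneg _
  have hwne : ∃ i', 0 < w i' := by
    obtain ⟨i', hi'⟩ := Function.ne_iff.mp hxv0
    exact ⟨i', by simpa [hwdef] using norm_pos_iff.mpr hi'⟩
  have hkey : ∀ i', w i' ≤ ∑ j', ‖A i' j'‖ * w j' := by
    intro i'
    have h1 : w i' = ‖(A.mulVec xv) i'‖ := by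
      rw [heig]
      simp only [Pi.smul_apply, smul_eq_mul, hwdef, norm_mul, hμ1, one_mul]
    rw [h1]
    calc ‖(A.mulVec xv) i'‖ = ‖∑ j', A i' j' * xv j'‖ := rfl
      _ ≤ ∑ j', ‖A i' j' * xv j'‖ := norm_sum_le _ _
      _ = ∑ j', ‖A i' j'‖ * w j' := Finset.sum_congr rfl fun j' _ => by
          rw [norm_mul, hwdef]
  have hsubv : ∀ i', w i' ≤ B.mulVec w i' := by
    intro i'
    refine (hkey i').trans ?_
    rw [mulVec_apply']
    exact Finset.sum_le_sum fun j' _ =>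
      mul_le_mul_of_nonneg_right (hAB i' j') (hw0 j')
  have hsrB : spectralRadius ℂ (B.map Complex.ofReal) ≤ 1 := part2
  obtain ⟨hfixw, hwpos⟩ := wielandt_fixed hBnn hconnB hsrB hw0 hwne hsubv
  -- equality of the two sums
  have hsums : ∑ j', ‖A i j'‖ * w j' = ∑ j', B i j' * w j' := by
    have h1 : ∑ j', ‖A i j'‖ * w j' ≤ ∑ j', B i j' * w j' :=
      Finset.sum_le_sum fun j' _ => mul_le_mul_of_nonneg_right (hAB i j') (hw0 j')
    have h2 : ∑ j', B i j' * w j' = w i := by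
      rw [← mulVec_apply' B w i]
      exact hfixw i
    have h3 := hkey i
    linarith
  have hterm := (Finset.sum_eq_sum_iff_of_le
    (fun j' _ => mul_le_mul_of_nonneg_right (hAB i j') (hw0 j'))).mp hsums j
    (Finset.mem_univ j)
  have : ‖A i j‖ = B i j := by
    have hwj := hwpos j
    exact mul_right_cancel₀ (ne_of_gt hwj) hterm
  rw [← this, hA]


end AnalyticComb
end
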